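/- Let G be a triangle-free finite simple graph of maximum degree at most 3 that admits a 0-bend CPG representation, and let G' be the 2-subdivision of G. Then the line graph L(G') admits a 0-bend CPG representation. -/

import Mathlib

/-! ## Grid paths and CPG representations -/

/-- Two grid points of `ℤ × ℤ` at L¹-distance 1 (i.e. joined by a unit grid segment). -/
def GridStep (p q : ℤ × ℤ) : Prop :=
  (p.1 - q.1).natAbs + (p.2 - q.2).natAbs = 1

/-- A grid path: a sequence of at least two grid points, consecutive points at distance 1,
with no repeated grid point (so the traced curve neither crosses nor retraces itself). -/
structure GridPath where
  pts : List (ℤ × ℤ)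
  two_le_length : 2 ≤ pts.length
  step : pts.Chain' GridStep
  nodup : pts.Nodup

namespace GridPath

theorem ne_nil (P : GridPath) : P.pts ≠ [] := by
  intro h
  have h2 := P.two_le_length
  rw [h] at h2
  simp at h2

/-- The set of grid points of a grid path. -/
def toSet (P : GridPath) : Set (ℤ × ℤ) := {p | p ∈ P.pts}

/-- The first extreme point of a grid path. -/
def first (P : GridPath) : ℤ × ℤ := P.pts.head P.ne_nil

/-- The second extreme point of a grid path. -/
def last (P : GridPath) : ℤ × ℤ := P.pts.getLast P.ne_nil

/-- `p` is an endpoint (extreme point) of the grid path `P`. -/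
def IsEndpoint (P : GridPath) (p : ℤ × ℤ) : Prop := p = P.first ∨ p = P.last

/-- `p` is an interior grid point of `P`: it lies on `P` but is not an endpoint. -/
def IsInterior (P : GridPath) (p : ℤ × ℤ) : Prop := p ∈ P.toSet ∧ ¬ P.IsEndpoint p

/-- `p` is a bend of `P`: an interior grid point at which `P` turns 90 degrees. -/
def IsBend (P : GridPath) (p : ℤ × ℤ) : Prop :=
  ∃ a c : ℤ × ℤ, [a, p, c] <:+: P.pts ∧ a.1 ≠ c.1 ∧ a.2 ≠ c.2

/-- The set of bend points of `P`. -/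
def bendSet (P : GridPath) : Set (ℤ × ℤ) := {p | P.IsBend p}

/-- `P` has at most `k` bends. -/
def BendsAtMost (P : GridPath) (k : ℕ) : Prop := P.bendSet.ncard ≤ k

end GridPath

/-- `p` and `q` are consecutive grid points of the list `l` (in either order);
equivalently, the path traced by `l` uses the unit grid segment joining `p` and `q`. -/
def ConsecIn (l : List (ℤ × ℤ)) (p q : ℤ × ℤ) : Prop :=
  [p, q] <:+: l ∨ [q, p] <:+: l

/-- A CPG representation of a simple graph `G`: a family of pairwise interiorly disjoint
grid paths, one for each vertex, such that two distinct vertices are adjacent iff the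
corresponding paths have a common point. -/
structure CPGRep {V : Type*} (G : SimpleGraph V) where
  path : V → GridPath
  interiorly_disjoint : ∀ u v : V, u ≠ v → ∀ p : ℤ × ℤ,
    p ∈ (path u).toSet → p ∈ (path v).toSet →
    (path u).IsEndpoint p ∨ (path v).IsEndpoint p
  no_shared_segment : ∀ u v : V, u ≠ v → ∀ p q : ℤ × ℤ,
    ConsecIn (path u).pts p q → ¬ ConsecIn (path v).pts p q
  adj_iff : ∀ u v : V, u ≠ v →
    (G.Adj u v ↔ ∃ p : ℤ × ℤ, p ∈ (path u).toSet ∧ p ∈ (path v).toSet)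

namespace CPGRep

variable {V : Type*} {G : SimpleGraph V}

/-- A `k`-bend CPG representation: every path has at most `k` bends. -/
def BendsAtMost (R : CPGRep G) (k : ℕ) : Prop :=
  ∀ u : V, (R.path u).BendsAtMost k

/-- `p` is a free endpoint of the path of `u`: an endpoint of `R.path u`
belonging to no other path of the representation. -/
def FreeEndpoint (R : CPGRep G) (u : V) (p : ℤ × ℤ) : Prop :=
  (R.path u).IsEndpoint p ∧ ∀ v : V, v ≠ u → p ∉ (R.path v).toSet

end CPGRep

/-- A graph is CPG if it admits a CPG representation. -/
def IsCPG {V : Type*} (G : SimpleGraph V) : Prop := Nonempty (CPGRep G)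

/-- A graph is `B_k`-CPG if it admits a CPG representation in which every path
has at most `k` bends. -/
def IsBkCPG {V : Type*} (G : SimpleGraph V) (k : ℕ) : Prop :=
  ∃ R : CPGRep G, R.BendsAtMost k

/-! ## The 2-subdivision -/

/-- The vertex type of the 2-subdivision of `G`: the original vertices, together with, for
every edge `uv` of `G`, the two new vertices `(u, v)` (the subdivision vertex adjacent
to `u`) and `(v, u)` (the one adjacent to `v`). -/
def SubdivV {V : Type*} (G : SimpleGraph V) : Type _ :=
  V ⊕ {p : V × V // G.Adj p.1 p.2}

/-- The defining relation of the 2-subdivision: every edge `uv` of `G` is replaced by the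
path `u — (u,v) — (v,u) — v`. -/
def twoSubRel {V : Type*} (G : SimpleGraph V) : SubdivV G → SubdivV G → Prop
  | Sum.inl u, Sum.inr e => e.1.1 = u
  | Sum.inr e, Sum.inr g => e.1.1 = g.1.2 ∧ e.1.2 = g.1.1
  | _, _ => False

/-- The 2-subdivision of `G`: every edge `uv` is replaced by a path `u — x_{uv} — y_{uv} — v`
with two new vertices. -/
def twoSubdivision {V : Type*} (G : SimpleGraph V) : SimpleGraph (SubdivV G) :=
  SimpleGraph.fromRel (twoSubRel G)

/-- The line graph of a graph `H`: its vertices are the edges of `H`, two distinct edges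
being adjacent if and only if they share an endvertex. -/
def lineGraph {W : Type*} (H : SimpleGraph W) : SimpleGraph H.edgeSet :=
  SimpleGraph.fromRel (fun e g => ∃ w : W, w ∈ e.1 ∧ w ∈ g.1)

/-! ### Part 1: straight segments as grid paths -/

/-- A point on the axis-parallel line with direction `d` (false = horizontal, i.e. the
varying coordinate is the first) and offset `b`, at parameter `t`. -/
def pnt (d : Bool) (b t : ℤ) : ℤ × ℤ := if d then (b, t) else (t, b)

lemma pnt_inj {d : Bool} {b t t' : ℤ} (h : pnt d b t = pnt d b t') : t = t' := by
  cases d <;> simp [pnt, Prod.ext_iff] at h <;> tauto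

lemma pnt_eq_same {d : Bool} {b b' t t' : ℤ} (h : pnt d b t = pnt d b' t') :
    b = b' ∧ t = t' := by
  cases d <;> simp [pnt, Prod.ext_iff] at h <;> tauto

lemma pnt_eq_cross {d d' : Bool} {b b' t t' : ℤ} (hd : d ≠ d')
    (h : pnt d b t = pnt d' b' t') : t = b' ∧ b = t' := by
  cases d <;> cases d' <;> simp_all [pnt, Prod.ext_iff]

lemma pnt_cross_eq {d d' : Bool} (hd : d ≠ d') (b t : ℤ) :
    pnt d b t = pnt d' t b := by
  cases d <;> cases d' <;> simp_all [pnt]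

/-- A straight piece: direction, offset, start/end parameters. -/
structure Pc where
  d : Bool
  b : ℤ
  s : ℤ
  e : ℤ

/-- Membership of a point on a piece. -/
def onPc (π : Pc) (p : ℤ × ℤ) : Prop := ∃ t, π.s ≤ t ∧ t ≤ π.e ∧ p = pnt π.d π.b t

/-- A point is an extreme point of the piece. -/
def extPc (π : Pc) (p : ℤ × ℤ) : Prop := p = pnt π.d π.b π.s ∨ p = pnt π.d π.b π.e

def segPts (d : Bool) (b s : ℤ) (n : ℕ) : List (ℤ × ℤ) :=
  (List.range (n+1)).map (fun i : ℕ => pnt d b (s + (i : ℤ)))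

lemma segPts_length (d : Bool) (b s : ℤ) (n : ℕ) : (segPts d b s n).length = n + 1 := by
  rw [segPts, List.length_map, List.length_range]

lemma segPts_getElem (d : Bool) (b s : ℤ) (n : ℕ) (i : ℕ) (h : i < (segPts d b s n).length) :
    (segPts d b s n)[i] = pnt d b (s + (i : ℤ)) := by
  simp only [segPts, List.getElem_map, List.getElem_range]

lemma gridStep_pnt (d : Bool) (b t : ℤ) : GridStep (pnt d b t) (pnt d b (t+1)) := by
  cases d <;> simp [pnt, GridStep] <;> omega

lemma segPts_ne_nil (d : Bool) (b s : ℤ) (n : ℕ) : segPts d b s n ≠ [] := by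
  have := segPts_length d b s n
  intro h; rw [h] at this; simp at this

lemma segPts_head (d : Bool) (b s : ℤ) (n : ℕ) (h : segPts d b s n ≠ []) :
    (segPts d b s n).head h = pnt d b s := by
  have h0 : 0 < (segPts d b s n).length := by rw [segPts_length]; omega
  have := List.getElem_zero h0
  rw [← this, segPts_getElem]
  norm_num

/-- The grid path of a piece with `s < e`. -/
def mkSeg (π : Pc) (h : π.s < π.e) : GridPath where
  pts := segPts π.d π.b π.s (π.e - π.s).toNat
  two_le_length := by rw [segPts_length]; omega
  step := by
    rw [segPts, List.Chain', List.isChain_map]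
    refine (List.isChain_range_succ _ _).mpr ?_
    intro m _
    have h1 : (((m.succ : ℕ)) : ℤ) = (m : ℤ) + 1 := by push_cast; ring
    rw [h1, show π.s + ((m:ℤ)+1) = (π.s + (m:ℤ)) + 1 by ring]
    exact gridStep_pnt _ _ _
  nodup := by
    rw [segPts]
    refine List.Nodup.map ?_ List.nodup_range
    intro i j hij
    have := pnt_inj hij
    omega

lemma mkSeg_pts (π : Pc) (h : π.s < π.e) :
    (mkSeg π h).pts = segPts π.d π.b π.s (π.e - π.s).toNat := rfl

lemma mem_mkSeg (π : Pc) (h : π.s < π.e) (p : ℤ × ℤ) :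
    p ∈ (mkSeg π h).toSet ↔ onPc π p := by
  show p ∈ (mkSeg π h).pts ↔ _
  rw [mkSeg_pts, segPts, List.mem_map]
  constructor
  · rintro ⟨i, hi, rfl⟩
    rw [List.mem_range] at hi
    exact ⟨π.s + (i:ℤ), by omega, by omega, rfl⟩
  · rintro ⟨t, h1, h2, rfl⟩
    refine ⟨(t - π.s).toNat, ?_, ?_⟩
    · rw [List.mem_range]; omega
    · rw [show π.s + ((t - π.s).toNat : ℤ) = t by omega]

lemma mkSeg_first (π : Pc) (h : π.s < π.e) : (mkSeg π h).first = pnt π.d π.b π.s := by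
  rw [GridPath.first]
  exact segPts_head _ _ _ _ _

lemma segPts_getLast (d : Bool) (b s : ℤ) (n : ℕ) (h : segPts d b s n ≠ []) :
    (segPts d b s n).getLast h = pnt d b (s + (n : ℤ)) := by
  rw [List.getLast_eq_getElem, segPts_getElem]
  congr 1
  rw [segPts_length]
  omega

lemma mkSeg_last (π : Pc) (h : π.s < π.e) : (mkSeg π h).last = pnt π.d π.b π.e := by
  rw [GridPath.last]
  refine (segPts_getLast π.d π.b π.s (π.e - π.s).toNat _).trans ?_
  congr 1
  omega

lemma mkSeg_endpoint (π : Pc) (h : π.s < π.e) (p : ℤ × ℤ) :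
    (mkSeg π h).IsEndpoint p ↔ extPc π p := by
  rw [GridPath.IsEndpoint, mkSeg_first, mkSeg_last, extPc]

lemma consecIn_mem {l : List (ℤ × ℤ)} {p q : ℤ × ℤ} (h : ConsecIn l p q) :
    p ∈ l ∧ q ∈ l := by
  rcases h with h | h
  · exact ⟨h.subset (by simp), h.subset (by simp)⟩
  · exact ⟨h.subset (by simp), h.subset (by simp)⟩

lemma consecIn_ne {l : List (ℤ × ℤ)} (hl : l.Nodup) {p q : ℤ × ℤ} (h : ConsecIn l p q) :
    p ≠ q := by
  rcases h with h | h
  · have := hl.sublist h.sublist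
    simp at this; exact this
  · have := hl.sublist h.sublist
    simp at this; exact fun e => this e.symm

lemma mkSeg_bends (π : Pc) (h : π.s < π.e) : (mkSeg π h).BendsAtMost 0 := by
  have he : (mkSeg π h).bendSet = ∅ := by
    ext p
    simp only [GridPath.bendSet, Set.mem_setOf_eq, Set.mem_empty_iff_false, iff_false]
    rintro ⟨a, c, hinf, h1, h2⟩
    have ha : a ∈ (mkSeg π h).toSet := hinf.subset (by simp)
    have hc : c ∈ (mkSeg π h).toSet := hinf.subset (by simp)
    rw [mem_mkSeg] at ha hc
    obtain ⟨t1, _, _, rfl⟩ := ha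
    obtain ⟨t2, _, _, rfl⟩ := hc
    cases hd : π.d <;> rw [hd] at h1 h2 <;> simp [pnt] at h1 h2
  rw [GridPath.BendsAtMost, he]
  simp

/-- A pair of consecutive entries of a list is an infix. -/
lemma pair_infix_of_getElem {α : Type*} (l : List α) (i : ℕ) (h : i + 1 < l.length) :
    [l[i], l[i+1]] <:+: l := by
  refine ⟨l.take i, l.drop (i+2), ?_⟩
  have h1 : l.drop i = l[i] :: l.drop (i+1) := List.drop_eq_getElem_cons (by omega)
  have h2 : l.drop (i+1) = l[i+1] :: l.drop (i+2) := List.drop_eq_getElem_cons (by omega)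
  calc l.take i ++ [l[i], l[i+1]] ++ l.drop (i+2)
      = l.take i ++ (l[i] :: (l[i+1] :: l.drop (i+2))) := by simp
    _ = l.take i ++ l.drop i := by rw [h1, ← h2]
    _ = l := List.take_append_drop i l
/-! ### Part 2: every 0-bend grid path is a straight segment -/

lemma infix_lift {α : Type*} {l t : List α} {x : α} (h : l <:+: t) : l <:+: x :: t := by
  obtain ⟨pre, suf, rfl⟩ := h
  exact ⟨x :: pre, suf, rfl⟩

/-- In a grid path with no bends, consecutive steps are equal. -/
lemma chain_const_dir : ∀ (t : List (ℤ × ℤ)) (x y : ℤ × ℤ),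
    List.Chain' GridStep (x :: y :: t) → (x :: y :: t).Nodup →
    (∀ a p c, [a, p, c] <:+: (x :: y :: t) → a.1 = c.1 ∨ a.2 = c.2) →
    List.Chain' (fun p q => q.1 - p.1 = y.1 - x.1 ∧ q.2 - p.2 = y.2 - x.2) (x :: y :: t) := by
  intro t
  induction t with
  | nil =>
    intro x y _ _ _
    exact List.isChain_pair.mpr ⟨rfl, rfl⟩
  | cons z t' ih =>
    intro x y hc hn hb
    have h1 : GridStep x y := (List.isChain_cons_cons.mp hc).1
    have hc2 : List.Chain' GridStep (y :: z :: t') := (List.isChain_cons_cons.mp hc).2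
    have h2 : GridStep y z := (List.isChain_cons_cons.mp hc2).1
    have hxz : x ≠ z := by
      intro e
      have := hn
      rw [List.nodup_cons] at this
      exact this.1 (e ▸ (by simp : z ∈ y :: z :: t'))
    have hbxz : x.1 = z.1 ∨ x.2 = z.2 := hb x y z ⟨[], t', rfl⟩
    have key : z.1 - y.1 = y.1 - x.1 ∧ z.2 - y.2 = y.2 - x.2 := by
      rw [GridStep] at h1 h2
      have hne : ¬(x.1 = z.1 ∧ x.2 = z.2) := by
        intro ⟨e1, e2⟩; exact hxz (Prod.ext e1 e2)
      rcases hbxz with h | h <;> omega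
    have htail := ih y z hc2 (List.nodup_cons.mp hn).2
      (fun a p c hi => hb a p c (infix_lift hi))
    rw [key.1, key.2] at htail
    exact List.isChain_cons_cons.mpr ⟨⟨rfl, rfl⟩, htail⟩

lemma chain_getElem {α : Type*} {R : α → α → Prop} {l : List α} (h : List.Chain' R l)
    (i : ℕ) (hi : i + 1 < l.length) : R l[i] l[i+1] := by
  have := List.isChain_iff_getElem.mp h i (by omega)
  simpa [List.get_eq_getElem] using this

/-- Affine description of a list: build the segment data. -/
lemma build_from_affine (P : GridPath) (d : Bool) (b t0 σ : ℤ) (hσ : σ = 1 ∨ σ = -1)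
    (hf : ∀ i : ℕ, ∀ h : i < P.pts.length, P.pts[i] = pnt d b (t0 + σ * (i : ℤ))) :
    ∃ s e : ℤ, s < e ∧
      (∀ p, p ∈ P.toSet ↔ ∃ t, s ≤ t ∧ t ≤ e ∧ p = pnt d b t) ∧
      (∀ p, P.IsEndpoint p → p = pnt d b s ∨ p = pnt d b e) ∧
      (∀ t, s ≤ t → t < e → ConsecIn P.pts (pnt d b t) (pnt d b (t+1))) := by
  have hlen := P.two_le_length
  set n : ℕ := P.pts.length - 1 with hn
  have hn1 : 1 ≤ n := by omega
  have hmem : ∀ p, p ∈ P.toSet ↔ ∃ i : ℕ, i ≤ n ∧ p = pnt d b (t0 + σ * (i:ℤ)) := by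
    intro p
    constructor
    · intro hp
      obtain ⟨i, hi, rfl⟩ := List.mem_iff_getElem.mp hp
      exact ⟨i, by omega, hf i hi⟩
    · rintro ⟨i, hi, rfl⟩
      have hi' : i < P.pts.length := by omega
      exact List.mem_iff_getElem.mpr ⟨i, hi', (hf i hi')⟩
  have hfirst : P.first = pnt d b t0 := by
    have h0 : 0 < P.pts.length := by omega
    rw [GridPath.first, ← List.getElem_zero h0, hf 0 h0]
    norm_num
  have hlast : P.last = pnt d b (t0 + σ * (n:ℤ)) := by
    rw [GridPath.last, List.getLast_eq_getElem, hf (P.pts.length - 1) (by omega)]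
  rcases hσ with rfl | rfl
  · refine ⟨t0, t0 + n, by omega, ?_, ?_, ?_⟩
    · intro p
      rw [hmem]
      constructor
      · rintro ⟨i, hi, rfl⟩; exact ⟨t0 + i, by omega, by omega, by congr 1; omega⟩
      · rintro ⟨t, h1, h2, rfl⟩
        exact ⟨(t - t0).toNat, by omega, by rw [show t0 + 1 * ((t - t0).toNat : ℤ) = t by omega]⟩
    · intro p hp
      rcases hp with rfl | rfl
      · left; rw [hfirst]
      · right; rw [hlast]; norm_num
    · intro t h1 h2
      have hi : (t - t0).toNat + 1 < P.pts.length := by omega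
      left
      have e1 : P.pts[(t - t0).toNat] = pnt d b t := by
        rw [hf _ (by omega)]; congr 1; omega
      have e2 : P.pts[(t - t0).toNat + 1] = pnt d b (t + 1) := by
        rw [hf _ hi]; congr 1; push_cast; omega
      have := pair_infix_of_getElem P.pts (t - t0).toNat hi
      rwa [e1, e2] at this
  · refine ⟨t0 - n, t0, by omega, ?_, ?_, ?_⟩
    · intro p
      rw [hmem]
      constructor
      · rintro ⟨i, hi, rfl⟩; exact ⟨t0 - i, by omega, by omega, by congr 1; omega⟩
      · rintro ⟨t, h1, h2, rfl⟩
        exact ⟨(t0 - t).toNat, by omega, by rw [show t0 + -1 * ((t0 - t).toNat : ℤ) = t by omega]⟩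
    · intro p hp
      rcases hp with rfl | rfl
      · right; rw [hfirst]
      · left; rw [hlast]; congr 1; omega
    · intro t h1 h2
      have hi : (t0 - t - 1).toNat + 1 < P.pts.length := by omega
      right
      have e1 : P.pts[(t0 - t - 1).toNat] = pnt d b (t + 1) := by
        rw [hf _ (by omega)]; congr 1; omega
      have e2 : P.pts[(t0 - t - 1).toNat + 1] = pnt d b t := by
        rw [hf _ hi]; congr 1; push_cast; omega
      have := pair_infix_of_getElem P.pts (t0 - t - 1).toNat hi
      rwa [e1, e2] at this

/-- Every grid path with at most 0 bends is a straight axis-parallel segment. -/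
lemma exists_line_of_b0 (P : GridPath) (h0 : P.BendsAtMost 0) :
    ∃ (d : Bool) (b s e : ℤ), s < e ∧
      (∀ p, p ∈ P.toSet ↔ ∃ t, s ≤ t ∧ t ≤ e ∧ p = pnt d b t) ∧
      (∀ p, P.IsEndpoint p → p = pnt d b s ∨ p = pnt d b e) ∧
      (∀ t, s ≤ t → t < e → ConsecIn P.pts (pnt d b t) (pnt d b (t+1))) := by
  have hbend : ∀ a p c, [a, p, c] <:+: P.pts → a.1 = c.1 ∨ a.2 = c.2 := by
    intro a p c hi
    by_contra hcon
    push_neg at hcon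
    have hAbend : P.IsBend p := ⟨a, c, hi, hcon.1, hcon.2⟩
    have hfin : P.bendSet.Finite := by
      refine Set.Finite.subset (List.finite_toSet P.pts) ?_
      rintro q ⟨a', c', hi', _, _⟩
      exact hi'.subset (by simp)
    have hememp : P.bendSet = ∅ := (Set.ncard_eq_zero hfin).mp (le_antisymm h0 (by positivity))
    have hmemb : p ∈ P.bendSet := hAbend
    rw [hememp] at hmemb
    exact hmemb
  obtain ⟨x, y, t, hxyt⟩ : ∃ x y t, P.pts = x :: y :: t := by
    have := P.two_le_length
    match hp : P.pts with
    | [] => rw [hp] at this; simp at this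
    | [a] => rw [hp] at this; simp at this
    | a :: b :: t => exact ⟨a, b, t, rfl⟩
  have hchain := chain_const_dir t x y (hxyt ▸ P.step) (hxyt ▸ P.nodup) (hxyt ▸ hbend)
  rw [← hxyt] at hchain
  have hstep1 : GridStep x y := by
    have := P.step
    rw [hxyt] at this
    exact (List.isChain_cons_cons.mp this).1
  have hcoord : ∀ i : ℕ, ∀ h : i < P.pts.length,
      (P.pts[i]).1 = x.1 + (y.1 - x.1) * (i:ℤ) ∧ (P.pts[i]).2 = x.2 + (y.2 - x.2) * (i:ℤ) := by
    intro i
    induction i with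
    | zero =>
      intro h
      have h00 : P.pts[0] = x := by rw [List.getElem_of_eq hxyt]; rfl
      rw [h00]; norm_num
    | succ k ihk =>
      intro h
      have hk := ihk (by omega)
      have hrel := chain_getElem hchain k (by omega)
      have hc1 : (y.1 - x.1) * ((k:ℤ)+1) = (y.1 - x.1) * (k:ℤ) + (y.1 - x.1) := by ring
      have hc2 : (y.2 - x.2) * ((k:ℤ)+1) = (y.2 - x.2) * (k:ℤ) + (y.2 - x.2) := by ring
      constructor
      · rw [show ((k+1:ℕ):ℤ) = (k:ℤ)+1 by push_cast; ring]
        linarith [hk.1, hrel.1]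
      · rw [show ((k+1:ℕ):ℤ) = (k:ℤ)+1 by push_cast; ring]
        linarith [hk.2, hrel.2]
  have hunit : (y.1 - x.1).natAbs + (y.2 - x.2).natAbs = 1 := by
    rw [GridStep] at hstep1; omega
  have hcases : (y.1 - x.1 = 1 ∧ y.2 - x.2 = 0) ∨ (y.1 - x.1 = -1 ∧ y.2 - x.2 = 0)
      ∨ (y.1 - x.1 = 0 ∧ y.2 - x.2 = 1) ∨ (y.1 - x.1 = 0 ∧ y.2 - x.2 = -1) := by omega
  rcases hcases with ⟨e1, e2⟩ | ⟨e1, e2⟩ | ⟨e1, e2⟩ | ⟨e1, e2⟩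
  · have haff : ∀ i : ℕ, ∀ h : i < P.pts.length, P.pts[i] = pnt false x.2 (x.1 + 1 * (i:ℤ)) := by
      intro i hi
      have hcd := hcoord i hi
      rw [e1, e2] at hcd
      have : P.pts[i] = (x.1 + 1 * (i:ℤ), x.2) := by
        rw [Prod.ext_iff]
        exact ⟨by have h1 := hcd.1; omega, by have h2 := hcd.2; omega⟩
      rw [this]; simp [pnt]
    obtain ⟨s, e, h⟩ := build_from_affine P false x.2 x.1 1 (Or.inl rfl) haff
    exact ⟨false, x.2, s, e, h⟩
  · have haff : ∀ i : ℕ, ∀ h : i < P.pts.length, P.pts[i] = pnt false x.2 (x.1 + (-1) * (i:ℤ)) := by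
      intro i hi
      have hcd := hcoord i hi
      rw [e1, e2] at hcd
      have : P.pts[i] = (x.1 + (-1) * (i:ℤ), x.2) := by
        rw [Prod.ext_iff]
        exact ⟨by have h1 := hcd.1; omega, by have h2 := hcd.2; omega⟩
      rw [this]; simp [pnt]
    obtain ⟨s, e, h⟩ := build_from_affine P false x.2 x.1 (-1) (Or.inr rfl) haff
    exact ⟨false, x.2, s, e, h⟩
  · have haff : ∀ i : ℕ, ∀ h : i < P.pts.length, P.pts[i] = pnt true x.1 (x.2 + 1 * (i:ℤ)) := by
      intro i hi
      have hcd := hcoord i hi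
      rw [e1, e2] at hcd
      have : P.pts[i] = (x.1, x.2 + 1 * (i:ℤ)) := by
        rw [Prod.ext_iff]
        exact ⟨by have h1 := hcd.1; omega, by have h2 := hcd.2; omega⟩
      rw [this]; simp [pnt]
    obtain ⟨s, e, h⟩ := build_from_affine P true x.1 x.2 1 (Or.inl rfl) haff
    exact ⟨true, x.1, s, e, h⟩
  · have haff : ∀ i : ℕ, ∀ h : i < P.pts.length, P.pts[i] = pnt true x.1 (x.2 + (-1) * (i:ℤ)) := by
      intro i hi
      have hcd := hcoord i hi
      rw [e1, e2] at hcd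
      have : P.pts[i] = (x.1, x.2 + (-1) * (i:ℤ)) := by
        rw [Prod.ext_iff]
        exact ⟨by have h1 := hcd.1; omega, by have h2 := hcd.2; omega⟩
      rw [this]; simp [pnt]
    obtain ⟨s, e, h⟩ := build_from_affine P true x.1 x.2 (-1) (Or.inr rfl) haff
    exact ⟨true, x.1, s, e, h⟩
/-! ### Part 3: abstract segment representations -/

/-- Abstract data of a 0-bend CPG representation: each vertex is an axis-parallel
segment given by direction, offset and a parameter interval. -/
structure SegRep {V : Type*} (G : SimpleGraph V) where
  dir : V → Bool
  off : V → ℤ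
  lo : V → ℤ
  hi : V → ℤ
  lohi : ∀ u, lo u < hi u
  adj_iff : ∀ u v : V, u ≠ v → (G.Adj u v ↔ ∃ t1 t2 : ℤ, lo u ≤ t1 ∧ t1 ≤ hi u ∧
    lo v ≤ t2 ∧ t2 ≤ hi v ∧ pnt (dir u) (off u) t1 = pnt (dir v) (off v) t2)
  shared_endpoint : ∀ u v : V, u ≠ v → ∀ t1 t2 : ℤ, lo u ≤ t1 → t1 ≤ hi u →
    lo v ≤ t2 → t2 ≤ hi v → pnt (dir u) (off u) t1 = pnt (dir v) (off v) t2 →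
    (t1 = lo u ∨ t1 = hi u) ∨ (t2 = lo v ∨ t2 = hi v)
  unique_shared : ∀ u v : V, u ≠ v → ∀ t1 t2 s1 s2 : ℤ, lo u ≤ t1 → t1 ≤ hi u →
    lo v ≤ t2 → t2 ≤ hi v → lo u ≤ s1 → s1 ≤ hi u → lo v ≤ s2 → s2 ≤ hi v →
    pnt (dir u) (off u) t1 = pnt (dir v) (off v) t2 →
    pnt (dir u) (off u) s1 = pnt (dir v) (off v) s2 → t1 = s1

/-- Any 0-bend CPG representation yields an abstract segment representation. -/
lemma segRep_of_b0 {V : Type*} {G : SimpleGraph V} (R : CPGRep G) (hR : R.BendsAtMost 0) :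
    Nonempty (SegRep G) := by
  have hch := fun u => exists_line_of_b0 (R.path u) (hR u)
  choose d b s e hse hmem hend hcons using hch
  refine ⟨⟨d, b, s, e, hse, ?_, ?_, ?_⟩⟩
  · intro u v huv
    rw [R.adj_iff u v huv]
    constructor
    · rintro ⟨p, hpu, hpv⟩
      obtain ⟨t1, h1, h2, rfl⟩ := (hmem u p).mp hpu
      obtain ⟨t2, h3, h4, hp⟩ := (hmem v _).mp hpv
      exact ⟨t1, t2, h1, h2, h3, h4, hp⟩
    · rintro ⟨t1, t2, h1, h2, h3, h4, hp⟩
      exact ⟨pnt (d u) (b u) t1, (hmem u _).mpr ⟨t1, h1, h2, rfl⟩,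
        (hmem v _).mpr ⟨t2, h3, h4, hp⟩⟩
  · intro u v huv t1 t2 h1 h2 h3 h4 hp
    have hu : pnt (d u) (b u) t1 ∈ (R.path u).toSet := (hmem u _).mpr ⟨t1, h1, h2, rfl⟩
    have hv : pnt (d u) (b u) t1 ∈ (R.path v).toSet := (hmem v _).mpr ⟨t2, h3, h4, hp⟩
    rcases R.interiorly_disjoint u v huv _ hu hv with h | h
    · rcases hend u _ h with h' | h'
      · exact Or.inl (Or.inl (pnt_inj h'))
      · exact Or.inl (Or.inr (pnt_inj h'))
    · rcases hend v _ h with h' | h'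
      · rw [hp] at h'; exact Or.inr (Or.inl (pnt_inj h'))
      · rw [hp] at h'; exact Or.inr (Or.inr (pnt_inj h'))
  · intro u v huv t1 t2 s1 s2 h1 h2 h3 h4 h5 h6 h7 h8 hp hq
    by_contra hne
    -- two distinct shared points
    by_cases hd : d u = d v
    · -- parallel: same line, overlapping in two params, get a shared unit segment
      have e1 := pnt_eq_same (hd ▸ hp)
      have e2 := pnt_eq_same (hd ▸ hq)
      -- t1 = t2, s1 = s2, b u = b v
      have hbb : b u = b v := e1.1
      have ht : t1 = t2 := e1.2
      have hs : s1 = s2 := e2.2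
      set m := min t1 s1 with hm
      have hm1 : s u ≤ m ∧ m + 1 ≤ e u := by omega
      have hm2 : s v ≤ m ∧ m + 1 ≤ e v := by omega
      have hcu : ConsecIn (R.path u).pts (pnt (d u) (b u) m) (pnt (d u) (b u) (m+1)) :=
        hcons u m (by omega) (by omega)
      have hcv : ConsecIn (R.path v).pts (pnt (d v) (b v) m) (pnt (d v) (b v) (m+1)) :=
        hcons v m (by omega) (by omega)
      rw [← hd, ← hbb] at hcv
      exact R.no_shared_segment u v huv _ _ hcu hcv
    · -- perpendicular: the crossing point is unique
      have e1 := pnt_eq_cross hd hp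
      have e2 := pnt_eq_cross hd hq
      omega

/-- Build a 0-bend CPG representation from abstract piece data. -/
lemma isBkCPG_of_pieces {W : Type*} (H : SimpleGraph W) (pc : W → Pc)
    (hse : ∀ w, (pc w).s < (pc w).e)
    (key : ∀ w1 w2 : W, w1 ≠ w2 → ∀ p q : ℤ × ℤ, onPc (pc w1) p → onPc (pc w2) p →
      onPc (pc w1) q → onPc (pc w2) q →
      p = q ∧ (extPc (pc w1) p ∨ extPc (pc w2) p))
    (hadj : ∀ w1 w2 : W, w1 ≠ w2 →
      (H.Adj w1 w2 ↔ ∃ p, onPc (pc w1) p ∧ onPc (pc w2) p)) : IsBkCPG H 0 := by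
  refine ⟨⟨fun w => mkSeg (pc w) (hse w), ?_, ?_, ?_⟩, ?_⟩
  · intro u v huv p hpu hpv
    rw [mem_mkSeg] at hpu hpv
    rcases (key u v huv p p hpu hpv hpu hpv).2 with h | h
    · exact Or.inl ((mkSeg_endpoint _ _ _).mpr h)
    · exact Or.inr ((mkSeg_endpoint _ _ _).mpr h)
  · intro u v huv p q hcu hcv
    have h1 := consecIn_mem hcu
    have h2 := consecIn_mem hcv
    have hne : p ≠ q := consecIn_ne (mkSeg (pc u) (hse u)).nodup hcu
    have hp1 : p ∈ (mkSeg (pc u) (hse u)).toSet := h1.1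
    have hq1 : q ∈ (mkSeg (pc u) (hse u)).toSet := h1.2
    have hp2 : p ∈ (mkSeg (pc v) (hse v)).toSet := h2.1
    have hq2 : q ∈ (mkSeg (pc v) (hse v)).toSet := h2.2
    rw [mem_mkSeg] at hp1 hq1 hp2 hq2
    exact hne (key u v huv p q hp1 hp2 hq1 hq2).1
  · intro u v huv
    rw [hadj u v huv]
    constructor
    · rintro ⟨p, h1, h2⟩
      exact ⟨p, (mem_mkSeg _ _ _).mpr h1, (mem_mkSeg _ _ _).mpr h2⟩
    · rintro ⟨p, h1, h2⟩
      exact ⟨p, (mem_mkSeg _ _ _).mp h1, (mem_mkSeg _ _ _).mp h2⟩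
  · intro w
    exact mkSeg_bends (pc w) (hse w)
/-! ### Part 4: structure of the line graph of the 2-subdivision -/

section GraphStructure

variable {V : Type*} {G : SimpleGraph V}

lemma twoSub_adj_inl_inl (u v : V) : ¬ (twoSubdivision G).Adj (Sum.inl u) (Sum.inl v) := by
  intro h
  erw [twoSubdivision, SimpleGraph.fromRel_adj] at h
  rcases h.2 with h' | h' <;> exact h'

lemma twoSub_adj_inl_inr (u : V) (e : {p : V × V // G.Adj p.1 p.2}) :
    (twoSubdivision G).Adj (Sum.inl u) (Sum.inr e) ↔ e.1.1 = u := by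
  erw [twoSubdivision, SimpleGraph.fromRel_adj]
  constructor
  · rintro ⟨-, h | h⟩
    · exact h
    · exact h.elim
  · intro h
    exact ⟨Sum.inl_ne_inr, Or.inl h⟩

lemma twoSub_adj_inr_inr (e g : {p : V × V // G.Adj p.1 p.2}) :
    (twoSubdivision G).Adj (Sum.inr e) (Sum.inr g) ↔ e ≠ g ∧ e.1.1 = g.1.2 ∧ e.1.2 = g.1.1 := by
  erw [twoSubdivision, SimpleGraph.fromRel_adj]
  constructor
  · rintro ⟨hne, h | h⟩
    · exact ⟨fun hh => hne (congrArg Sum.inr hh), h⟩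
    · exact ⟨fun hh => hne (congrArg Sum.inr hh), h.2.symm, h.1.symm⟩
  · rintro ⟨hne, h1, h2⟩
    exact ⟨fun hh => hne (Sum.inr.inj hh), Or.inl ⟨h1, h2⟩⟩

variable (G) in
/-- The subdivision vertex `(u,v)`. -/
def sv (u v : V) (h : G.Adj u v) : SubdivV G := Sum.inr ⟨(u, v), h⟩

variable (G) in
/-- The half-edge `{u, (u,v)}` of the 2-subdivision, as a vertex of the line graph. -/
def aVert (u v : V) (h : G.Adj u v) : (twoSubdivision G).edgeSet :=
  ⟨s(Sum.inl u, sv G u v h), by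
    erw [SimpleGraph.mem_edgeSet]
    show (twoSubdivision G).Adj (Sum.inl u) (Sum.inr ⟨(u, v), h⟩)
    exact (twoSub_adj_inl_inr u ⟨(u, v), h⟩).mpr rfl⟩

variable (G) in
/-- The middle edge `{(u,v), (v,u)}` of the 2-subdivision, as a vertex of the line graph. -/
def mVert (u v : V) (h : G.Adj u v) : (twoSubdivision G).edgeSet :=
  ⟨s(sv G u v h, sv G v u h.symm), by
    rw [SimpleGraph.mem_edgeSet]
    show (twoSubdivision G).Adj (Sum.inr ⟨(u, v), h⟩) (Sum.inr ⟨(v, u), h.symm⟩)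
    refine (twoSub_adj_inr_inr _ _).mpr ⟨?_, rfl, rfl⟩
    intro hh
    have := congrArg (fun x => x.1.1) hh
    exact h.ne this⟩

lemma aVert_val (u v : V) (h : G.Adj u v) :
    (aVert G u v h).1 = s(Sum.inl u, sv G u v h) := rfl

lemma mVert_val (u v : V) (h : G.Adj u v) :
    (mVert G u v h).1 = s(sv G u v h, sv G v u h.symm) := rfl

lemma sv_injEq {u v u' v' : V} (h : G.Adj u v) (h' : G.Adj u' v')
    (hh : sv G u v h = sv G u' v' h') : u = u' ∧ v = v' := by
  rw [sv, sv] at hh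
  have := congrArg Subtype.val (Sum.inr.inj hh)
  rw [Prod.ext_iff] at this
  exact this

lemma sv_eq_of (u v : V) (h : G.Adj u v) (h' : G.Adj u v) : sv G u v h = sv G u v h' := rfl

lemma inl_ne_sv (w u v : V) (h : G.Adj u v) : (Sum.inl w : SubdivV G) ≠ sv G u v h := by
  rw [sv]; simp

lemma edge_classify (ε : (twoSubdivision G).edgeSet) :
    (∃ u v, ∃ h : G.Adj u v, ε = aVert G u v h) ∨
    (∃ u v, ∃ h : G.Adj u v, ε = mVert G u v h) := by
  obtain ⟨e, he⟩ := ε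
  induction e using Sym2.ind with
  | _ x y =>
    rw [SimpleGraph.mem_edgeSet] at he
    match x, y with
    | Sum.inl u, Sum.inl v => exact absurd he (twoSub_adj_inl_inl u v)
    | Sum.inl u, Sum.inr e =>
      left
      have h1 : e.1.1 = u := (twoSub_adj_inl_inr u e).mp he
      have hadj : G.Adj u e.1.2 := by rw [← h1]; exact e.2
      have hsv : Sum.inr e = sv G u e.1.2 hadj := by
        rw [sv]; congr 1; apply Subtype.ext; rw [Prod.ext_iff]; exact ⟨h1, rfl⟩
      refine ⟨u, e.1.2, hadj, Subtype.ext ?_⟩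
      show s(Sum.inl u, Sum.inr e) = s(Sum.inl u, sv G u e.1.2 hadj)
      rw [← hsv]
    | Sum.inr e, Sum.inl u =>
      left
      erw [SimpleGraph.adj_comm] at he
      have h1 : e.1.1 = u := (twoSub_adj_inl_inr u e).mp he
      have hadj : G.Adj u e.1.2 := by rw [← h1]; exact e.2
      have hsv : Sum.inr e = sv G u e.1.2 hadj := by
        rw [sv]; congr 1; apply Subtype.ext; rw [Prod.ext_iff]; exact ⟨h1, rfl⟩
      refine ⟨u, e.1.2, hadj, Subtype.ext ?_⟩
      show s(Sum.inr e, Sum.inl u) = s(Sum.inl u, sv G u e.1.2 hadj)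
      rw [Sym2.eq_swap, ← hsv]
    | Sum.inr e, Sum.inr g =>
      right
      obtain ⟨hne, h1, h2⟩ := (twoSub_adj_inr_inr e g).mp he
      have hsv2 : Sum.inr g = sv G e.1.2 e.1.1 e.2.symm := by
        rw [sv]; congr 1; apply Subtype.ext; rw [Prod.ext_iff]; exact ⟨h2.symm, h1.symm⟩
      refine ⟨e.1.1, e.1.2, e.2, Subtype.ext ?_⟩
      show s(Sum.inr e, Sum.inr g) = s(sv G e.1.1 e.1.2 e.2, sv G e.1.2 e.1.1 e.2.symm)
      rw [← hsv2]
      rfl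

lemma lineGraph_adj {W : Type*} (H : SimpleGraph W) (ε1 ε2 : H.edgeSet) :
    (lineGraph H).Adj ε1 ε2 ↔ ε1 ≠ ε2 ∧ ∃ w : W, w ∈ ε1.1 ∧ w ∈ ε2.1 := by
  rw [lineGraph, SimpleGraph.fromRel_adj]
  constructor
  · rintro ⟨hne, h | h⟩
    · exact ⟨hne, h⟩
    · obtain ⟨w, h1, h2⟩ := h
      exact ⟨hne, w, h2, h1⟩
  · rintro ⟨hne, h⟩
    exact ⟨hne, Or.inl h⟩

lemma aVert_injEq {u v u' v' : V} (h : G.Adj u v) (h' : G.Adj u' v')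
    (hh : aVert G u v h = aVert G u' v' h') : u = u' ∧ v = v' := by
  have h2 : s(Sum.inl u, sv G u v h) = s(Sum.inl u', sv G u' v' h') := congrArg Subtype.val hh
  erw [Sym2.eq_iff] at h2
  rcases h2 with ⟨ha, hb⟩ | ⟨ha, hb⟩
  · exact ⟨Sum.inl.inj ha, (sv_injEq h h' hb).2⟩
  · exact absurd ha (inl_ne_sv u u' v' h')

lemma mVert_symm (u v : V) (h : G.Adj u v) : mVert G u v h = mVert G v u h.symm := by
  apply Subtype.ext
  rw [mVert_val, mVert_val]
  exact Sym2.eq_swap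

lemma aVert_ne_mVert {u v u' v' : V} (h : G.Adj u v) (h' : G.Adj u' v') :
    aVert G u v h ≠ mVert G u' v' h' := by
  intro hh
  have h2 : s(Sum.inl u, sv G u v h) = s(sv G u' v' h', sv G v' u' h'.symm) :=
    congrArg Subtype.val hh
  erw [Sym2.eq_iff] at h2
  rcases h2 with ⟨ha, hb⟩ | ⟨ha, hb⟩
  · exact inl_ne_sv u u' v' h' ha
  · exact inl_ne_sv u v' u' h'.symm ha

lemma mVert_injEq {u v u' v' : V} (h : G.Adj u v) (h' : G.Adj u' v')
    (hh : mVert G u v h = mVert G u' v' h') : (u = u' ∧ v = v') ∨ (u = v' ∧ v = u') := by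
  have h2 : s(sv G u v h, sv G v u h.symm) = s(sv G u' v' h', sv G v' u' h'.symm) :=
    congrArg Subtype.val hh
  rw [Sym2.eq_iff] at h2
  rcases h2 with ⟨ha, hb⟩ | ⟨ha, hb⟩
  · exact Or.inl (sv_injEq h h' ha)
  · exact Or.inr (sv_injEq h h'.symm ha)

lemma adj_aVert_aVert {u v u' v' : V} (h : G.Adj u v) (h' : G.Adj u' v') :
    (lineGraph (twoSubdivision G)).Adj (aVert G u v h) (aVert G u' v' h') ↔
      u = u' ∧ ¬(u = u' ∧ v = v') := by
  rw [lineGraph_adj]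
  constructor
  · rintro ⟨hne, w, h1, h2⟩
    have hne' : ¬(u = u' ∧ v = v') := fun hh => hne (by
      rcases hh with ⟨rfl, rfl⟩; rfl)
    erw [aVert_val, Sym2.mem_iff] at h1 h2
    rcases h1 with rfl | rfl
    · rcases h2 with h2 | h2
      · exact ⟨Sum.inl.inj h2, hne'⟩
      · exact absurd h2 (inl_ne_sv _ u' v' h')
    · rcases h2 with h2 | h2
      · exact absurd h2.symm (inl_ne_sv u' u v h)
      · rcases sv_injEq h h' h2 with ⟨rfl, rfl⟩
        exact absurd ⟨rfl, rfl⟩ hne'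
  · rintro ⟨rfl, hne'⟩
    refine ⟨?_, Sum.inl u, ?_, ?_⟩
    · intro hh
      exact hne' ⟨rfl, (aVert_injEq h h' hh).2⟩
    · erw [aVert_val, Sym2.mem_iff]; left; rfl
    · erw [aVert_val, Sym2.mem_iff]; left; rfl

lemma adj_aVert_mVert {u v u' v' : V} (h : G.Adj u v) (h' : G.Adj u' v') :
    (lineGraph (twoSubdivision G)).Adj (aVert G u v h) (mVert G u' v' h') ↔
      (u = u' ∧ v = v') ∨ (u = v' ∧ v = u') := by
  rw [lineGraph_adj]
  constructor
  · rintro ⟨hne, w, h1, h2⟩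
    erw [aVert_val, Sym2.mem_iff] at h1
    rw [mVert_val, Sym2.mem_iff] at h2
    rcases h1 with rfl | rfl
    · rcases h2 with h2 | h2
      · exact absurd h2 (inl_ne_sv _ u' v' h')
      · exact absurd h2 (inl_ne_sv _ v' u' h'.symm)
    · rcases h2 with h2 | h2
      · exact Or.inl (sv_injEq h h' h2)
      · exact Or.inr (sv_injEq h h'.symm h2)
  · intro hcase
    refine ⟨aVert_ne_mVert h h', sv G u v h, ?_, ?_⟩
    · erw [aVert_val, Sym2.mem_iff]; right; rfl
    · rw [mVert_val, Sym2.mem_iff]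
      rcases hcase with ⟨rfl, rfl⟩ | ⟨rfl, rfl⟩
      · left; rfl
      · right; rfl

lemma adj_mVert_mVert {u v u' v' : V} (h : G.Adj u v) (h' : G.Adj u' v')
    (hadj : (lineGraph (twoSubdivision G)).Adj (mVert G u v h) (mVert G u' v' h')) :
    False := by
  rw [lineGraph_adj] at hadj
  obtain ⟨hne, w, h1, h2⟩ := hadj
  rw [mVert_val, Sym2.mem_iff] at h1 h2
  have hcase : (u = u' ∧ v = v') ∨ (u = v' ∧ v = u') := by
    rcases h1 with rfl | rfl <;> rcases h2 with h2 | h2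
    · exact Or.inl (sv_injEq h h' h2)
    · exact Or.inr (sv_injEq h h'.symm h2)
    · rcases sv_injEq h.symm h' h2 with ⟨rfl, rfl⟩
      exact Or.inr ⟨rfl, rfl⟩
    · rcases sv_injEq h.symm h'.symm h2 with ⟨rfl, rfl⟩
      exact Or.inl ⟨rfl, rfl⟩
  apply hne
  rcases hcase with ⟨rfl, rfl⟩ | ⟨rfl, rfl⟩
  · rfl
  · exact mVert_symm _ _ _

end GraphStructure
/-! ### Part 5: the contact structure of a segment representation -/

section Core

open Classical in
/-- Triangle helper. -/
lemma no_triangle {V : Type*} {G : SimpleGraph V} (htf : G.CliqueFree 3) {u v w : V}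
    (h1 : G.Adj u v) (h2 : G.Adj u w) (h3 : G.Adj v w) : False := by
  classical
  exact htf {u, v, w} (SimpleGraph.is3Clique_iff.mpr ⟨u, v, w, h1, h2, h3, rfl⟩)

open Classical in
/-- Degree helper: no four distinct neighbors. -/
lemma no_four_nbrs {V : Type*} [Fintype V] {G : SimpleGraph V}
    (hdeg : ∀ x : V, (G.neighborSet x).ncard ≤ 3) {u w1 w2 w3 w4 : V}
    (h1 : G.Adj u w1) (h2 : G.Adj u w2) (h3 : G.Adj u w3) (h4 : G.Adj u w4)
    (h12 : w1 ≠ w2) (h13 : w1 ≠ w3) (h14 : w1 ≠ w4) (h23 : w2 ≠ w3) (h24 : w2 ≠ w4)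
    (h34 : w3 ≠ w4) : False := by
  classical
  have hsub : ({w1, w2, w3, w4} : Finset V) ⊆ G.neighborFinset u := by
    intro x hx
    simp only [Finset.mem_insert, Finset.mem_singleton] at hx
    rw [SimpleGraph.mem_neighborFinset]
    rcases hx with rfl | rfl | rfl | rfl <;> assumption
  have hcard : ({w1, w2, w3, w4} : Finset V).card = 4 := by
    rw [Finset.card_insert_of_notMem (by simp [h12, h13, h14]),
      Finset.card_insert_of_notMem (by simp [h23, h24]),
      Finset.card_insert_of_notMem (by simp [h34]), Finset.card_singleton]
  have hsub' : (({w1, w2, w3, w4} : Finset V) : Set V) ⊆ G.neighborSet u := by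
    intro x hx
    simp only [Finset.coe_insert, Finset.coe_singleton, Set.mem_insert_iff,
      Set.mem_singleton_iff] at hx
    rw [SimpleGraph.mem_neighborSet]
    rcases hx with rfl | rfl | rfl | rfl <;> assumption
  have hle := Set.ncard_le_ncard hsub' (Set.toFinite _)
  rw [Set.ncard_coe_finset, hcard] at hle
  have := hdeg u
  omega

variable {V : Type*} [Fintype V] {G : SimpleGraph V}

/-- The parameter along `u`'s segment of the contact point with `v`. -/
def ctau (R : SegRep G) (u v : V) : ℤ :=
  if R.dir u = R.dir v then max (R.lo u) (R.lo v) else R.off v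

lemma ctau_symm_par (R : SegRep G) {u v : V} (hd : R.dir u = R.dir v) :
    ctau R u v = ctau R v u := by
  rw [ctau, ctau, if_pos hd, if_pos hd.symm, max_comm]

/-- Facts about collinear adjacent segments. -/
lemma collinear_fact (R : SegRep G) {u v : V} (huv : G.Adj u v) (hd : R.dir u = R.dir v) :
    R.off u = R.off v ∧ ctau R u v = max (R.lo u) (R.lo v) ∧
    max (R.lo u) (R.lo v) = min (R.hi u) (R.hi v) := by
  have hne := huv.ne
  obtain ⟨t1, t2, b1, b2, b3, b4, hp⟩ := (R.adj_iff u v hne).mp huv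
  rw [hd] at hp
  obtain ⟨hoff, ht⟩ := pnt_eq_same hp
  refine ⟨hoff, by rw [ctau, if_pos hd], ?_⟩
  have hle : max (R.lo u) (R.lo v) ≤ min (R.hi u) (R.hi v) := by omega
  by_contra hlt
  have hlt' : max (R.lo u) (R.lo v) + 1 ≤ min (R.hi u) (R.hi v) := by omega
  set c := max (R.lo u) (R.lo v)
  have e1 : pnt (R.dir u) (R.off u) c = pnt (R.dir v) (R.off v) c := by
    rw [hd, hoff]
  have e2 : pnt (R.dir u) (R.off u) (c+1) = pnt (R.dir v) (R.off v) (c+1) := by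
    rw [hd, hoff]
  have := R.unique_shared u v hne c c (c+1) (c+1) (by omega) (by omega) (by omega)
    (by omega) (by omega) (by omega) (by omega) (by omega) e1 e2
  omega

/-- The contact point: basic bounds and matching. -/
lemma contact_spec (R : SegRep G) {u v : V} (huv : G.Adj u v) :
    R.lo u ≤ ctau R u v ∧ ctau R u v ≤ R.hi u ∧
    pnt (R.dir u) (R.off u) (ctau R u v) = pnt (R.dir v) (R.off v) (ctau R v u) := by
  have hne := huv.ne
  obtain ⟨t1, t2, b1, b2, b3, b4, hp⟩ := (R.adj_iff u v hne).mp huv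
  by_cases hd : R.dir u = R.dir v
  · obtain ⟨hoff, -, hmm⟩ := collinear_fact R huv hd
    rw [ctau, if_pos hd, ← ctau_symm_par R hd, ctau, if_pos hd]
    refine ⟨by omega, by omega, by rw [hd, hoff]⟩
  · have hcross := pnt_eq_cross hd hp
    rw [ctau, if_neg hd, ctau, if_neg (fun hh => hd hh.symm)]
    refine ⟨by omega, by omega, pnt_cross_eq hd _ _⟩

/-- Any shared point of two adjacent segments is the contact point. -/
lemma contact_unique (R : SegRep G) {u v : V} (huv : G.Adj u v) {t1 t2 : ℤ}
    (b1 : R.lo u ≤ t1) (b2 : t1 ≤ R.hi u) (b3 : R.lo v ≤ t2) (b4 : t2 ≤ R.hi v)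
    (hp : pnt (R.dir u) (R.off u) t1 = pnt (R.dir v) (R.off v) t2) :
    t1 = ctau R u v ∧ t2 = ctau R v u := by
  have hne := huv.ne
  have hs1 := contact_spec R huv
  have hs2 := contact_spec R huv.symm
  constructor
  · exact R.unique_shared u v hne t1 t2 (ctau R u v) (ctau R v u) b1 b2 b3 b4
      hs1.1 hs1.2.1 hs2.1 hs2.2.1 hp hs1.2.2
  · exact R.unique_shared v u hne.symm t2 t1 (ctau R v u) (ctau R u v) b3 b4 b1 b2
      hs2.1 hs2.2.1 hs1.1 hs1.2.1 hp.symm hs2.2.2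

/-- Distinct neighbours have distinct contact parameters (uses triangle-freeness). -/
lemma ctau_inj (R : SegRep G) (htf : G.CliqueFree 3) {u v w : V} (huv : G.Adj u v)
    (huw : G.Adj u w) (hvw : v ≠ w) : ctau R u v ≠ ctau R u w := by
  intro he
  have hs1 := contact_spec R huv
  have hs2 := contact_spec R huw
  have hs1' := contact_spec R huv.symm
  have hs2' := contact_spec R huw.symm
  have hpq : pnt (R.dir v) (R.off v) (ctau R v u) = pnt (R.dir w) (R.off w) (ctau R w u) := by
    rw [← hs1.2.2, ← hs2.2.2, he]
  have hadj : G.Adj v w := (R.adj_iff v w hvw).mpr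
    ⟨ctau R v u, ctau R w u, hs1'.1, hs1'.2.1, hs2'.1, hs2'.2.1, hpq⟩
  exact no_triangle htf huv huw hadj

/-- The contact parameter of `v` is in the middle of `u`'s segment. -/
def isMid (R : SegRep G) (u v : V) : Prop :=
  (∃ w, G.Adj u w ∧ ctau R u w < ctau R u v) ∧ (∃ w, G.Adj u w ∧ ctau R u v < ctau R u w)

lemma mid_interior (R : SegRep G) {u v : V} (hm : isMid R u v) :
    R.lo u < ctau R u v ∧ ctau R u v < R.hi u := by
  obtain ⟨⟨w1, hw1, hlt1⟩, ⟨w2, hw2, hlt2⟩⟩ := hm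
  have hs1 := contact_spec R hw1
  have hs2 := contact_spec R hw2
  omega

lemma mid_unique_lt (R : SegRep G) (htf : G.CliqueFree 3)
    (hdeg : ∀ x : V, (G.neighborSet x).ncard ≤ 3) {u v v' : V} (huv : G.Adj u v)
    (huv' : G.Adj u v') (hm : isMid R u v) (hm' : isMid R u v')
    (hlt : ctau R u v < ctau R u v') : False := by
  obtain ⟨⟨b, hb, hbl⟩, -⟩ := hm
  obtain ⟨-, ⟨a, ha, hal⟩⟩ := hm'
  -- ctau u b < ctau u v < ctau u v' < ctau u a
  have d1 : b ≠ v := fun hh => by rw [hh] at hbl; omega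
  have d2 : b ≠ v' := fun hh => by rw [hh] at hbl; omega
  have d3 : b ≠ a := fun hh => by rw [hh] at hbl; omega
  have d4 : v ≠ v' := fun hh => by rw [hh] at hlt; omega
  have d5 : v ≠ a := fun hh => by rw [← hh] at hal; omega
  have d6 : v' ≠ a := fun hh => by rw [← hh] at hal; omega
  exact no_four_nbrs hdeg hb huv huv' ha d1 d2 d3 d4 d5 d6

lemma mid_unique (R : SegRep G) (htf : G.CliqueFree 3)
    (hdeg : ∀ x : V, (G.neighborSet x).ncard ≤ 3) {u v v' : V} (huv : G.Adj u v)
    (huv' : G.Adj u v') (hm : isMid R u v) (hm' : isMid R u v') : v = v' := by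
  by_contra hne
  rcases lt_trichotomy (ctau R u v) (ctau R u v') with h | h | h
  · exact mid_unique_lt R htf hdeg huv huv' hm hm' h
  · exact ctau_inj R htf huv huv' hne h
  · exact mid_unique_lt R htf hdeg huv' huv hm' hm h

lemma mid_not_both (R : SegRep G) {u v : V} (huv : G.Adj u v) (hm : isMid R u v)
    (hm' : isMid R v u) : False := by
  have h1 := mid_interior R hm
  have h2 := mid_interior R hm'
  have hs := contact_spec R huv
  have hs' := contact_spec R huv.symm
  have := R.shared_endpoint u v huv.ne (ctau R u v) (ctau R v u) hs.1 hs.2.1 hs'.1 hs'.2.1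
    hs.2.2
  omega

lemma mid_perp (R : SegRep G) {u v : V} (huv : G.Adj u v) (hm : isMid R u v) :
    R.dir u ≠ R.dir v := by
  intro hd
  obtain ⟨hoff, hc, hmm⟩ := collinear_fact R huv hd
  have hint := mid_interior R hm
  have h1 := R.lohi u
  have h2 := R.lohi v
  rw [hc] at hint
  omega

lemma mid_other_endpoint (R : SegRep G) {u v : V} (huv : G.Adj u v) (hm : isMid R u v) :
    ctau R v u = R.lo v ∨ ctau R v u = R.hi v := by
  have hint := mid_interior R hm
  have hs := contact_spec R huv
  have hs' := contact_spec R huv.symm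
  have := R.shared_endpoint u v huv.ne (ctau R u v) (ctau R v u) hs.1 hs.2.1 hs'.1 hs'.2.1
    hs.2.2
  omega

open Classical in
/-- The hub parameter on `u`'s segment (scaled by 8). -/
noncomputable def hubc (R : SegRep G) (u : V) : ℤ :=
  if h : ∃ v, G.Adj u v ∧ isMid R u v then 8 * ctau R u h.choose
  else if h2 : ∃ v, G.Adj u v ∧ ∀ w, G.Adj u w → ctau R u v ≤ ctau R u w then
    8 * ctau R u h2.choose + (if ctau R u h2.choose < R.hi u then 3 else -3)
  else 0

lemma hub_mid (R : SegRep G) (htf : G.CliqueFree 3)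
    (hdeg : ∀ x : V, (G.neighborSet x).ncard ≤ 3) {u v : V} (huv : G.Adj u v)
    (hm : isMid R u v) : hubc R u = 8 * ctau R u v := by
  have hex : ∃ x, G.Adj u x ∧ isMid R u x := ⟨v, huv, hm⟩
  rw [hubc, dif_pos hex]
  obtain ⟨hadj, hmid⟩ := hex.choose_spec
  rw [mid_unique R htf hdeg hadj huv hmid hm]

open Classical in
lemma exists_min_nbr {u v : V} (huv : G.Adj u v) (R : SegRep G) :
    ∃ v0, G.Adj u v0 ∧ ∀ w, G.Adj u w → ctau R u v0 ≤ ctau R u w := by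
  classical
  obtain ⟨x, hx, hmin⟩ := (G.neighborFinset u).exists_min_image (ctau R u)
    ⟨v, by rwa [SimpleGraph.mem_neighborFinset]⟩
  rw [SimpleGraph.mem_neighborFinset] at hx
  exact ⟨x, hx, fun w hw => hmin w (by rwa [SimpleGraph.mem_neighborFinset])⟩

lemma hub_nomid (R : SegRep G) {u v : V} (huv : G.Adj u v)
    (hnm : ¬∃ x, G.Adj u x ∧ isMid R u x) :
    ∃ v0, G.Adj u v0 ∧ (∀ w, G.Adj u w → ctau R u v0 ≤ ctau R u w) ∧
      hubc R u = 8 * ctau R u v0 + (if ctau R u v0 < R.hi u then 3 else -3) := by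
  have h2 : ∃ x, G.Adj u x ∧ ∀ w, G.Adj u w → ctau R u x ≤ ctau R u w :=
    exists_min_nbr huv R
  rw [hubc, dif_neg hnm, dif_pos h2]
  exact ⟨h2.choose, h2.choose_spec.1, h2.choose_spec.2, rfl⟩

lemma hub_range (R : SegRep G) (htf : G.CliqueFree 3)
    (hdeg : ∀ x : V, (G.neighborSet x).ncard ≤ 3) {u v : V} (huv : G.Adj u v) :
    8 * R.lo u < hubc R u ∧ hubc R u < 8 * R.hi u := by
  by_cases hex : ∃ x, G.Adj u x ∧ isMid R u x
  · obtain ⟨x, hx, hmx⟩ := hex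
    rw [hub_mid R htf hdeg hx hmx]
    have := mid_interior R hmx
    omega
  · obtain ⟨v0, hv0, -, heq⟩ := hub_nomid R huv hex
    have hb := contact_spec R hv0
    have hl := R.lohi u
    rw [heq]
    split_ifs with hh <;> omega

lemma hub_far (R : SegRep G) (htf : G.CliqueFree 3)
    (hdeg : ∀ x : V, (G.neighborSet x).ncard ≤ 3) {u v : V} (huv : G.Adj u v)
    (hnmv : ¬ isMid R u v) :
    8 * ctau R u v + 3 ≤ hubc R u ∨ hubc R u + 3 ≤ 8 * ctau R u v := by
  by_cases hex : ∃ x, G.Adj u x ∧ isMid R u x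
  · obtain ⟨x, hx, hmx⟩ := hex
    rw [hub_mid R htf hdeg hx hmx]
    have hxv : x ≠ v := fun hh => hnmv (hh ▸ hmx)
    have := ctau_inj R htf hx huv hxv
    omega
  · obtain ⟨v0, hv0, hmin, heq⟩ := hub_nomid R huv hex
    have hb0 := contact_spec R hv0
    have hbv := contact_spec R huv
    have hminv := hmin v huv
    rw [heq]
    by_cases hvv0 : ctau R u v = ctau R u v0
    · rw [← hvv0]
      split_ifs with hh
      · omega
      · omega
    · -- ctau u v0 < ctau u v, hence v0 is a min strictly below, and τ0 < hi u
      have hlt : ctau R u v0 < ctau R u v := by omega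
      have hh : ctau R u v0 < R.hi u := by omega
      rw [if_pos hh]
      omega

/-- The direction from the contact with `v` towards the hub of `u`. -/
noncomputable def dlt (R : SegRep G) (u v : V) : ℤ :=
  if 8 * ctau R u v < hubc R u then 1 else -1

lemma dlt_spec (R : SegRep G) (htf : G.CliqueFree 3)
    (hdeg : ∀ x : V, (G.neighborSet x).ncard ≤ 3) {u v : V} (huv : G.Adj u v)
    (hnmv : ¬ isMid R u v) :
    (dlt R u v = 1 ∧ 8 * ctau R u v + 3 ≤ hubc R u) ∨
    (dlt R u v = -1 ∧ hubc R u + 3 ≤ 8 * ctau R u v) := by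
  rcases hub_far R htf hdeg huv hnmv with h | h
  · left; exact ⟨if_pos (by omega), h⟩
  · right; exact ⟨if_neg (by omega), h⟩

lemma opp_sides (R : SegRep G) (htf : G.CliqueFree 3)
    (hdeg : ∀ x : V, (G.neighborSet x).ncard ≤ 3) {u v w : V} (huv : G.Adj u v)
    (huw : G.Adj u w) (hvw : v ≠ w) (hnmv : ¬ isMid R u v) (hnmw : ¬ isMid R u w) :
    (8 * ctau R u v + 3 ≤ hubc R u ∧ hubc R u + 3 ≤ 8 * ctau R u w) ∨
    (8 * ctau R u w + 3 ≤ hubc R u ∧ hubc R u + 3 ≤ 8 * ctau R u v) := by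
  have hfv := hub_far R htf hdeg huv hnmv
  have hfw := hub_far R htf hdeg huw hnmw
  have hvwne := ctau_inj R htf huv huw hvw
  -- exclude both on the same side of the hub
  by_cases hex : ∃ x, G.Adj u x ∧ isMid R u x
  · obtain ⟨z, hz, hmz⟩ := hex
    have hhub := hub_mid R htf hdeg hz hmz
    have hzv : z ≠ v := fun hh => hnmv (hh ▸ hmz)
    have hzw : z ≠ w := fun hh => hnmw (hh ▸ hmz)
    rcases hfv with h1 | h1 <;> rcases hfw with h2 | h2
    · -- both strictly below the hub: use the above-witness of z
      exfalso
      rw [hhub] at h1 h2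
      obtain ⟨-, ⟨a, ha, hal⟩⟩ := hmz
      have hav : a ≠ v := fun hh => by rw [← hh] at h1; omega
      have haw : a ≠ w := fun hh => by rw [← hh] at h2; omega
      have haz : a ≠ z := fun hh => by rw [hh] at hal; omega
      exact no_four_nbrs hdeg ha hz huv huw haz hav haw hzv hzw hvw
    · left; exact ⟨h1, h2⟩
    · right; exact ⟨h2, h1⟩
    · -- both strictly above the hub: use the below-witness of z
      exfalso
      rw [hhub] at h1 h2
      obtain ⟨⟨b, hb, hbl⟩, -⟩ := hmz
      have hbv : b ≠ v := fun hh => by rw [← hh] at h1; omega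
      have hbw : b ≠ w := fun hh => by rw [← hh] at h2; omega
      have hbz : b ≠ z := fun hh => by rw [hh] at hbl; omega
      exact no_four_nbrs hdeg hb hz huv huw hbz hbv hbw hzv hzw hvw
  · obtain ⟨v0, hv0, hmin, heq⟩ := hub_nomid R huv hex
    have hminv := hmin v huv
    have hminw := hmin w huw
    have hb0 := contact_spec R hv0
    have hbv := contact_spec R huv
    have hbw := contact_spec R huw
    rcases hfv with h1 | h1 <;> rcases hfw with h2 | h2
    · -- both below: both equal the minimum, contradiction
      exfalso
      rw [heq] at h1 h2
      by_cases hh : ctau R u v0 < R.hi u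
      · rw [if_pos hh] at h1 h2; omega
      · rw [if_neg hh] at h1 h2; omega
    · left; exact ⟨h1, h2⟩
    · right; exact ⟨h2, h1⟩
    · -- both above: the smaller of v, w would be a mid neighbour
      exfalso
      rw [heq] at h1 h2
      have hg1 : ctau R u v0 < ctau R u v := by
        by_cases hh : ctau R u v0 < R.hi u
        · rw [if_pos hh] at h1; omega
        · rw [if_neg hh] at h1; omega
      have hg2 : ctau R u v0 < ctau R u w := by
        by_cases hh : ctau R u v0 < R.hi u
        · rw [if_pos hh] at h2; omega
        · rw [if_neg hh] at h2; omega
      rcases lt_trichotomy (ctau R u v) (ctau R u w) with hvw' | hvw' | hvw'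
      · exact hex ⟨v, huv, ⟨v0, hv0, hg1⟩, ⟨w, huw, hvw'⟩⟩
      · exact hvwne hvw'
      · exact hex ⟨w, huw, ⟨v0, hv0, hg2⟩, ⟨v, huv, hvw'⟩⟩

end Core
/-! ### Part 6: the pieces of the new representation -/

section Pieces

open scoped Classical

variable {V : Type*} [Fintype V] {G : SimpleGraph V}

/-- Lexicographic comparison used for tie-breaking. -/
def lexGT (a b : ℤ × ℤ) : Prop := b.1 < a.1 ∨ (a.1 = b.1 ∧ b.2 < a.2)

lemma lexGT_asymm_total {a b : ℤ × ℤ} (h : a ≠ b) : lexGT a b ↔ ¬ lexGT b a := by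
  have h' : a.1 ≠ b.1 ∨ a.2 ≠ b.2 := by
    by_contra hc
    push_neg at hc
    exact h (Prod.ext hc.1 hc.2)
  unfold lexGT
  constructor
  · intro h1 h2
    rcases h1 with h1 | h1 <;> rcases h2 with h2 | h2 <;> omega
  · intro h1
    by_contra h2
    push_neg at h2
    rcases h' with h' | h' <;> omega

/-- The unit vector pointing from the contact with `v` into `u`'s segment. -/
noncomputable def invec (R : SegRep G) (u v : V) : ℤ × ℤ :=
  if R.dir u then (0, dlt R u v) else (dlt R u v, 0)

/-- Tie-breaking: does `u` keep the contact point with `v`? -/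
noncomputable def keep (R : SegRep G) (u v : V) : Prop :=
  lexGT (invec R u v) (invec R v u)

lemma dlt_cases (R : SegRep G) (u v : V) : dlt R u v = 1 ∨ dlt R u v = -1 := by
  rw [dlt]; split_ifs <;> simp

lemma dlt_lo (R : SegRep G) (htf : G.CliqueFree 3)
    (hdeg : ∀ x : V, (G.neighborSet x).ncard ≤ 3) {u v : V} (huv : G.Adj u v)
    (h : ctau R u v = R.lo u) : dlt R u v = 1 := by
  have := hub_range R htf hdeg huv
  rw [dlt, if_pos (by omega)]

lemma dlt_hi (R : SegRep G) (htf : G.CliqueFree 3)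
    (hdeg : ∀ x : V, (G.neighborSet x).ncard ≤ 3) {u v : V} (huv : G.Adj u v)
    (h : ctau R u v = R.hi u) : dlt R u v = -1 := by
  have := hub_range R htf hdeg huv
  rw [dlt, if_neg (by omega)]

lemma collinear_opp (R : SegRep G) {u v : V} (huv : G.Adj u v) (hd : R.dir u = R.dir v) :
    (ctau R u v = R.lo u ∧ ctau R v u = R.hi v) ∨
    (ctau R u v = R.hi u ∧ ctau R v u = R.lo v) := by
  obtain ⟨hoff, hc, hmm⟩ := collinear_fact R huv hd
  have hc' : ctau R u v = ctau R v u := ctau_symm_par R hd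
  have hlu := R.lohi u
  have hlv := R.lohi v
  omega

lemma invec_ne (R : SegRep G) (htf : G.CliqueFree 3)
    (hdeg : ∀ x : V, (G.neighborSet x).ncard ≤ 3) {u v : V} (huv : G.Adj u v) :
    invec R u v ≠ invec R v u := by
  intro heq
  rw [invec, invec] at heq
  by_cases hd : R.dir u = R.dir v
  · -- collinear: the two inward directions are opposite
    have hcase := collinear_opp R huv hd
    have hne : dlt R u v ≠ dlt R v u := by
      rcases hcase with ⟨h1, h2⟩ | ⟨h1, h2⟩
      · rw [dlt_lo R htf hdeg huv h1, dlt_hi R htf hdeg huv.symm h2]; omega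
      · rw [dlt_hi R htf hdeg huv h1, dlt_lo R htf hdeg huv.symm h2]; omega
    rw [← hd] at heq
    cases hdu : R.dir u <;> rw [hdu] at heq <;> simp [Prod.ext_iff] at heq <;>
      exact hne heq
  · have d1 := dlt_cases R u v
    have d2 := dlt_cases R v u
    cases hdu : R.dir u <;> cases hdv : R.dir v <;> rw [hdu, hdv] at heq <;>
      first
        | (exact hd (hdu.trans hdv.symm))
        | (simp [Prod.ext_iff] at heq; omega)

lemma keep_iff_not (R : SegRep G) (htf : G.CliqueFree 3)
    (hdeg : ∀ x : V, (G.neighborSet x).ncard ≤ 3) {u v : V} (huv : G.Adj u v) :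
    keep R u v ↔ ¬ keep R v u :=
  lexGT_asymm_total (invec_ne R htf hdeg huv)

/-- The retraction offset of the `a`-piece of `(u,v)` at its contact. -/
noncomputable def cAv (R : SegRep G) (u v : V) : ℤ :=
  if isMid R v u then 2 else if keep R u v then 0 else 1

lemma cAv_mem (R : SegRep G) (u v : V) : 0 ≤ cAv R u v ∧ cAv R u v ≤ 2 := by
  rw [cAv]; split_ifs <;> omega

noncomputable def mkPc (d : Bool) (b a a' : ℤ) : Pc := ⟨d, b, min a a', max a a'⟩

@[simp] lemma mkPc_d (d : Bool) (b a a' : ℤ) : (mkPc d b a a').d = d := rfl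
@[simp] lemma mkPc_b (d : Bool) (b a a' : ℤ) : (mkPc d b a a').b = b := rfl
@[simp] lemma mkPc_s (d : Bool) (b a a' : ℤ) : (mkPc d b a a').s = min a a' := rfl
@[simp] lemma mkPc_e (d : Bool) (b a a' : ℤ) : (mkPc d b a a').e = max a a' := rfl

lemma onPc_mkPc {d : Bool} {b a a' : ℤ} {p : ℤ × ℤ} :
    onPc (mkPc d b a a') p ↔ ∃ t, min a a' ≤ t ∧ t ≤ max a a' ∧ p = pnt d b t :=
  Iff.rfl

/-- The piece of the half-edge vertex `a_{uv}`. -/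
noncomputable def pieceA (R : SegRep G) (u v : V) : Pc :=
  if isMid R u v then
    mkPc (R.dir v) (8 * R.off v) (8 * ctau R v u) (8 * ctau R v u + dlt R v u)
  else
    mkPc (R.dir u) (8 * R.off u) (8 * ctau R u v + cAv R u v * dlt R u v) (hubc R u)

/-- The piece of the middle-edge vertex `m_{uv}`. -/
noncomputable def pieceM (R : SegRep G) (u v : V) : Pc :=
  if isMid R u v then
    mkPc (R.dir v) (8 * R.off v) (8 * ctau R v u + dlt R v u) (8 * ctau R v u + 2 * dlt R v u)
  else if isMid R v u then
    mkPc (R.dir u) (8 * R.off u) (8 * ctau R u v + dlt R u v) (8 * ctau R u v + 2 * dlt R u v)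
  else if keep R u v then
    mkPc (R.dir v) (8 * R.off v) (8 * ctau R v u) (8 * ctau R v u + dlt R v u)
  else
    mkPc (R.dir u) (8 * R.off u) (8 * ctau R u v) (8 * ctau R u v + dlt R u v)

lemma pieceM_symm (R : SegRep G) (htf : G.CliqueFree 3)
    (hdeg : ∀ x : V, (G.neighborSet x).ncard ≤ 3) {u v : V} (huv : G.Adj u v) :
    pieceM R u v = pieceM R v u := by
  by_cases hm : isMid R u v
  · have hm' : ¬ isMid R v u := fun hh => mid_not_both R huv hm hh
    rw [pieceM, if_pos hm, pieceM, if_neg hm', if_pos hm]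
  · by_cases hm' : isMid R v u
    · rw [pieceM, if_neg hm, if_pos hm', pieceM, if_pos hm']
    · by_cases hk : keep R u v
      · have hk' : ¬ keep R v u := ((keep_iff_not R htf hdeg huv).mp hk)
        rw [pieceM, if_neg hm, if_neg hm', if_pos hk, pieceM, if_neg hm', if_neg hm,
          if_neg hk']
      · have hk' : keep R v u := by
          by_contra hk'
          exact hk ((keep_iff_not R htf hdeg huv).mpr hk')
        rw [pieceM, if_neg hm, if_neg hm', if_neg hk, pieceM, if_neg hm', if_neg hm,
          if_pos hk']

/-- The hub point of `u`. -/
noncomputable def hubPt (R : SegRep G) (u : V) : ℤ × ℤ :=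
  pnt (R.dir u) (8 * R.off u) (hubc R u)

/-- The designated contact point of `a_{uv}` and `m_{uv}`. -/
noncomputable def desigAM (R : SegRep G) (u v : V) : ℤ × ℤ :=
  if isMid R u v then pnt (R.dir v) (8 * R.off v) (8 * ctau R v u + dlt R v u)
  else pnt (R.dir u) (8 * R.off u) (8 * ctau R u v + cAv R u v * dlt R u v)

/-- Scaled contact point equality. -/
lemma cPt8 (R : SegRep G) {u v : V} (huv : G.Adj u v) :
    pnt (R.dir u) (8 * R.off u) (8 * ctau R u v) =
    pnt (R.dir v) (8 * R.off v) (8 * ctau R v u) := by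
  have hs := (contact_spec R huv).2.2
  by_cases hd : R.dir u = R.dir v
  · obtain ⟨hoff, ht⟩ := pnt_eq_same (hd ▸ hs)
    rw [hd, hoff, ht]
  · obtain ⟨h1, h2⟩ := pnt_eq_cross hd hs
    rw [h1, ← h2, pnt_cross_eq hd]

/-- Bounds: points at distance at most 2 from a non-mid contact, towards the hub,
lie inside the scaled segment. -/
lemma off_bound (R : SegRep G) (htf : G.CliqueFree 3)
    (hdeg : ∀ x : V, (G.neighborSet x).ncard ≤ 3) {u v : V} (huv : G.Adj u v)
    (hnm : ¬ isMid R u v) {j : ℤ} (hj : 0 ≤ j ∧ j ≤ 2) :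
    8 * R.lo u ≤ 8 * ctau R u v + j * dlt R u v ∧
      8 * ctau R u v + j * dlt R u v ≤ 8 * R.hi u := by
  have hb := contact_spec R huv
  have hr := hub_range R htf hdeg huv
  rcases dlt_spec R htf hdeg huv hnm with ⟨hd, hf⟩ | ⟨hd, hf⟩ <;> rw [hd] <;>
    constructor <;> omega

/-- The pin lemma: a common point of two scaled segments is the scaled contact point. -/
lemma pin (R : SegRep G) {w1 w2 : V} (hne : w1 ≠ w2) {t1 t2 : ℤ}
    (hb1 : 8 * R.lo w1 ≤ t1) (hb2 : t1 ≤ 8 * R.hi w1) (hb3 : 8 * R.lo w2 ≤ t2)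
    (hb4 : t2 ≤ 8 * R.hi w2)
    (hp : pnt (R.dir w1) (8 * R.off w1) t1 = pnt (R.dir w2) (8 * R.off w2) t2) :
    G.Adj w1 w2 ∧ t1 = 8 * ctau R w1 w2 ∧ t2 = 8 * ctau R w2 w1 := by
  by_cases hd : R.dir w1 = R.dir w2
  · obtain ⟨hoff8, ht⟩ := pnt_eq_same (hd ▸ hp)
    have hoff : R.off w1 = R.off w2 := by omega
    have hio : max (R.lo w1) (R.lo w2) ≤ min (R.hi w1) (R.hi w2) := by omega
    have hadj : G.Adj w1 w2 := (R.adj_iff w1 w2 hne).mpr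
      ⟨max (R.lo w1) (R.lo w2), max (R.lo w1) (R.lo w2), by omega, by omega, by omega,
        by omega, by rw [hd, hoff]⟩
    obtain ⟨-, hc, hmm⟩ := collinear_fact R hadj hd
    have hc2 : ctau R w2 w1 = ctau R w1 w2 := (ctau_symm_par R hd).symm
    refine ⟨hadj, by omega, by omega⟩
  · obtain ⟨h1, h2⟩ := pnt_eq_cross hd hp
    have hb5 : R.lo w1 ≤ R.off w2 ∧ R.off w2 ≤ R.hi w1 := by omega
    have hb6 : R.lo w2 ≤ R.off w1 ∧ R.off w1 ≤ R.hi w2 := by omega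
    have hadj : G.Adj w1 w2 := (R.adj_iff w1 w2 hne).mpr
      ⟨R.off w2, R.off w1, hb5.1, hb5.2, hb6.1, hb6.2, pnt_cross_eq hd _ _⟩
    have e1 : ctau R w1 w2 = R.off w2 := by rw [ctau, if_neg hd]
    have e2 : ctau R w2 w1 = R.off w1 := by rw [ctau, if_neg (fun hh => hd hh.symm)]
    exact ⟨hadj, by omega, by omega⟩

end Pieces
/-! ### Part 7: intersection analysis of the pieces -/

section Families

open scoped Classical

variable {V : Type*} [Fintype V] {G : SimpleGraph V}

lemma onPc_mkPc_param {d : Bool} {b a a' t : ℤ} (h1 : min a a' ≤ t) (h2 : t ≤ max a a') :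
    onPc (mkPc d b a a') (pnt d b t) := ⟨t, h1, h2, rfl⟩

lemma extPc_mkPc {d : Bool} {b a a' t : ℤ} (h : t = a ∨ t = a') :
    extPc (mkPc d b a a') (pnt d b t) := by
  rw [extPc, mkPc_d, mkPc_b, mkPc_s, mkPc_e]
  rcases le_total a a' with hle | hle
  · rcases h with rfl | rfl
    · left; congr 1; omega
    · right; congr 1; omega
  · rcases h with rfl | rfl
    · right; congr 1; omega
    · left; congr 1; omega

lemma cdlt_bound (R : SegRep G) (u v : V) :
    -2 ≤ cAv R u v * dlt R u v ∧ cAv R u v * dlt R u v ≤ 2 := by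
  have h1 := cAv_mem R u v
  rcases dlt_cases R u v with h | h <;> rw [h] <;> constructor <;> omega

lemma pieceA_valid (R : SegRep G) (htf : G.CliqueFree 3)
    (hdeg : ∀ x : V, (G.neighborSet x).ncard ≤ 3) {u v : V} (huv : G.Adj u v) :
    (pieceA R u v).s < (pieceA R u v).e := by
  by_cases hm : isMid R u v
  · rw [pieceA, if_pos hm]
    rcases dlt_cases R v u with h | h <;> rw [mkPc_s, mkPc_e, h] <;> omega
  · rw [pieceA, if_neg hm, mkPc_s, mkPc_e]
    have h1 := cdlt_bound R u v
    rcases hub_far R htf hdeg huv hm with hf | hf <;> omega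

lemma pieceM_valid (R : SegRep G) {u v : V} (huv : G.Adj u v) :
    (pieceM R u v).s < (pieceM R u v).e := by
  rw [pieceM]
  split_ifs with h1 h2 h3 <;> rw [mkPc_s, mkPc_e]
  · rcases dlt_cases R v u with h | h <;> rw [h] <;> omega
  · rcases dlt_cases R u v with h | h <;> rw [h] <;> omega
  · rcases dlt_cases R v u with h | h <;> rw [h] <;> omega
  · rcases dlt_cases R u v with h | h <;> rw [h] <;> omega

/-- The hub point lies on every `a`-piece of `u`. -/
lemma hubPt_mem (R : SegRep G) (htf : G.CliqueFree 3)
    (hdeg : ∀ x : V, (G.neighborSet x).ncard ≤ 3) {u v : V} (huv : G.Adj u v) :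
    onPc (pieceA R u v) (hubPt R u) := by
  by_cases hm : isMid R u v
  · rw [pieceA, if_pos hm]
    have hpt : hubPt R u = pnt (R.dir v) (8 * R.off v) (8 * ctau R v u) := by
      rw [hubPt, hub_mid R htf hdeg huv hm]
      exact cPt8 R huv
    rw [hpt]
    exact onPc_mkPc_param (by omega) (by omega)
  · rw [pieceA, if_neg hm, hubPt]
    exact onPc_mkPc_param (by omega) (by omega)

/-- The designated contact point lies on `a_{uv}` and is one of its extreme points. -/
lemma desig_mem_A (R : SegRep G) (htf : G.CliqueFree 3)
    (hdeg : ∀ x : V, (G.neighborSet x).ncard ≤ 3) {u v : V} (huv : G.Adj u v) :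
    onPc (pieceA R u v) (desigAM R u v) ∧ extPc (pieceA R u v) (desigAM R u v) := by
  by_cases hm : isMid R u v
  · rw [pieceA, if_pos hm, desigAM, if_pos hm]
    exact ⟨onPc_mkPc_param (by omega) (by omega), extPc_mkPc (Or.inr rfl)⟩
  · rw [pieceA, if_neg hm, desigAM, if_neg hm]
    exact ⟨onPc_mkPc_param (by omega) (by omega), extPc_mkPc (Or.inl rfl)⟩

/-- The designated contact point lies on `m_{uv}`. -/
lemma desig_mem_M (R : SegRep G) {u v : V} (huv : G.Adj u v) :
    onPc (pieceM R u v) (desigAM R u v) := by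
  by_cases hm : isMid R u v
  · rw [pieceM, if_pos hm, desigAM, if_pos hm]
    exact onPc_mkPc_param (by omega) (by omega)
  · rw [desigAM, if_neg hm]
    by_cases hm2 : isMid R v u
    · rw [pieceM, if_neg hm, if_pos hm2, cAv, if_pos hm2]
      exact onPc_mkPc_param (by omega) (by omega)
    · by_cases hk : keep R u v
      · rw [pieceM, if_neg hm, if_neg hm2, if_pos hk, cAv, if_neg hm2, if_pos hk]
        rw [show (8 : ℤ) * ctau R u v + 0 * dlt R u v = 8 * ctau R u v by ring,
          cPt8 R huv]
        exact onPc_mkPc_param (by omega) (by omega)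
      · rw [pieceM, if_neg hm, if_neg hm2, if_neg hk, cAv, if_neg hm2, if_neg hk]
        exact onPc_mkPc_param (by omega) (by omega)

/-- Two `a`-pieces at the same vertex meet only in the hub point. -/
lemma famAA_same (R : SegRep G) (htf : G.CliqueFree 3)
    (hdeg : ∀ x : V, (G.neighborSet x).ncard ≤ 3) {u v v' : V} (huv : G.Adj u v)
    (huv' : G.Adj u v') (hvv' : v ≠ v') {p : ℤ × ℤ}
    (h1 : onPc (pieceA R u v) p) (h2 : onPc (pieceA R u v') p) :
    p = hubPt R u ∧ extPc (pieceA R u v) p := by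
  by_cases hm : isMid R u v <;> by_cases hm' : isMid R u v'
  · exact absurd (mid_unique R htf hdeg huv huv' hm hm') hvv'
  ·
    rw [pieceA, if_pos hm] at h1
    rw [pieceA, if_neg hm'] at h2
    obtain ⟨t1, ha1, ha2, rfl⟩ := h1
    obtain ⟨t2, hb1, hb2, hp⟩ := h2
    simp only [mkPc_s, mkPc_e, mkPc_d, mkPc_b] at ha1 ha2 hb1 hb2 hp ⊢
    have hnmvu : ¬ isMid R v u := fun hh => mid_not_both R huv hm hh
    have hov0 := off_bound R htf hdeg huv.symm hnmvu (j := 0) (by omega)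
    have hov1 := off_bound R htf hdeg huv.symm hnmvu (j := 1) (by omega)
    have hou := off_bound R htf hdeg huv' hm' (j := cAv R u v') (cAv_mem R u v')
    have hur := hub_range R htf hdeg huv
    have hpin := pin R huv.ne' (by omega) (by omega) (by omega) (by omega) hp
    obtain ⟨-, ht1, ht2⟩ := hpin
    have hhub := hub_mid R htf hdeg huv hm
    constructor
    · rw [ht1, hubPt, hhub, cPt8 R huv]
    · rw [pieceA, if_pos hm, ht1]
      exact extPc_mkPc (Or.inl rfl)
  ·
    rw [pieceA, if_neg hm] at h1
    rw [pieceA, if_pos hm'] at h2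
    obtain ⟨t1, ha1, ha2, rfl⟩ := h1
    obtain ⟨t2, hb1, hb2, hp⟩ := h2
    simp only [mkPc_s, mkPc_e, mkPc_d, mkPc_b] at ha1 ha2 hb1 hb2 hp ⊢
    have hnmv'u : ¬ isMid R v' u := fun hh => mid_not_both R huv' hm' hh
    have hov0 := off_bound R htf hdeg huv'.symm hnmv'u (j := 0) (by omega)
    have hov1 := off_bound R htf hdeg huv'.symm hnmv'u (j := 1) (by omega)
    have hou := off_bound R htf hdeg huv hm (j := cAv R u v) (cAv_mem R u v)
    have hur := hub_range R htf hdeg huv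
    have hpin := pin R huv'.ne (by omega) (by omega) (by omega) (by omega) hp
    obtain ⟨-, ht1, ht2⟩ := hpin
    have hhub := hub_mid R htf hdeg huv' hm'
    constructor
    · rw [ht1, hubPt, hhub]
    · rw [pieceA, if_neg hm, ht1, ← hhub]
      exact extPc_mkPc (Or.inr rfl)
  · -- both pieces are on the line of u
    rw [pieceA, if_neg hm] at h1
    rw [pieceA, if_neg hm'] at h2
    obtain ⟨t1, ha1, ha2, rfl⟩ := h1
    obtain ⟨t2, hb1, hb2, hp⟩ := h2
    simp only [mkPc_s, mkPc_e, mkPc_d, mkPc_b] at ha1 ha2 hb1 hb2 hp ⊢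
    have ht12 := pnt_inj hp
    have hopp := opp_sides R htf hdeg huv huv' hvv' hm hm'
    have hc1 := cdlt_bound R u v
    have hc2 := cdlt_bound R u v'
    have hth : t1 = hubc R u := by rcases hopp with hopp | hopp <;> omega
    constructor
    · rw [hth, hubPt]
    · rw [pieceA, if_neg hm, hth]
      exact extPc_mkPc (Or.inr rfl)

/-- The pieces `a_{uv}` and `m_{uv}` meet only in the designated contact point. -/
lemma famAM_same (R : SegRep G) (htf : G.CliqueFree 3)
    (hdeg : ∀ x : V, (G.neighborSet x).ncard ≤ 3) {u v : V} (huv : G.Adj u v) {p : ℤ × ℤ}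
    (h1 : onPc (pieceA R u v) p) (h2 : onPc (pieceM R u v) p) :
    p = desigAM R u v ∧ extPc (pieceA R u v) p := by
  by_cases hm : isMid R u v
  · rw [pieceA, if_pos hm] at h1
    rw [pieceM, if_pos hm] at h2
    obtain ⟨t1, ha1, ha2, rfl⟩ := h1
    obtain ⟨t2, hb1, hb2, hp⟩ := h2
    simp only [mkPc_s, mkPc_e, mkPc_d, mkPc_b] at ha1 ha2 hb1 hb2 hp ⊢
    have ht12 := pnt_inj hp
    have ht : t1 = 8 * ctau R v u + dlt R v u := by
      rcases dlt_cases R v u with h | h <;> omega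
    constructor
    · rw [desigAM, if_pos hm, ht]
    · rw [pieceA, if_pos hm, ht]
      exact extPc_mkPc (Or.inr rfl)
  · by_cases hm2 : isMid R v u
    · -- both pieces on the line of u, a-piece retracted by 2
      rw [pieceA, if_neg hm, cAv, if_pos hm2] at h1
      rw [pieceM, if_neg hm, if_pos hm2] at h2
      obtain ⟨t1, ha1, ha2, rfl⟩ := h1
      obtain ⟨t2, hb1, hb2, hp⟩ := h2
      simp only [mkPc_s, mkPc_e, mkPc_d, mkPc_b] at ha1 ha2 hb1 hb2 hp ⊢
      have ht12 := pnt_inj hp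
      have ht : t1 = 8 * ctau R u v + 2 * dlt R u v := by
        rcases dlt_spec R htf hdeg huv hm with ⟨h, hf⟩ | ⟨h, hf⟩ <;> omega
      constructor
      · rw [desigAM, if_neg hm, cAv, if_pos hm2, ht]
      · rw [pieceA, if_neg hm, cAv, if_pos hm2, ht]
        exact extPc_mkPc (Or.inl rfl)
    · by_cases hk : keep R u v
      · -- a-piece keeps the contact on the line of u; m-piece on the line of v
        rw [pieceA, if_neg hm, cAv, if_neg hm2, if_pos hk] at h1
        rw [pieceM, if_neg hm, if_neg hm2, if_pos hk] at h2
        obtain ⟨t1, ha1, ha2, rfl⟩ := h1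
        obtain ⟨t2, hb1, hb2, hp⟩ := h2
        simp only [mkPc_s, mkPc_e, mkPc_d, mkPc_b] at ha1 ha2 hb1 hb2 hp ⊢
        have hou := off_bound R htf hdeg huv hm (j := 0) (by omega)
        have hov0 := off_bound R htf hdeg huv.symm hm2 (j := 0) (by omega)
        have hov1 := off_bound R htf hdeg huv.symm hm2 (j := 1) (by omega)
        have hur := hub_range R htf hdeg huv
        have hpin := pin R huv.ne (by omega) (by omega) (by omega) (by omega) hp
        obtain ⟨-, ht1, ht2⟩ := hpin
        constructor
        · rw [desigAM, if_neg hm, cAv, if_neg hm2, if_pos hk, ht1]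
          congr 1
          ring
        · rw [pieceA, if_neg hm, cAv, if_neg hm2, if_pos hk, ht1]
          exact extPc_mkPc (Or.inl (by ring))
      · -- a-piece retracted by 1; both pieces on the line of u
        rw [pieceA, if_neg hm, cAv, if_neg hm2, if_neg hk] at h1
        rw [pieceM, if_neg hm, if_neg hm2, if_neg hk] at h2
        obtain ⟨t1, ha1, ha2, rfl⟩ := h1
        obtain ⟨t2, hb1, hb2, hp⟩ := h2
        simp only [mkPc_s, mkPc_e, mkPc_d, mkPc_b] at ha1 ha2 hb1 hb2 hp ⊢
        have ht12 := pnt_inj hp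
        have ht : t1 = 8 * ctau R u v + 1 * dlt R u v := by
          rcases dlt_spec R htf hdeg huv hm with ⟨h, hf⟩ | ⟨h, hf⟩ <;> omega
        constructor
        · rw [desigAM, if_neg hm, cAv, if_neg hm2, if_neg hk, ht]
        · rw [pieceA, if_neg hm, cAv, if_neg hm2, if_neg hk, ht]
          exact extPc_mkPc (Or.inl rfl)

lemma cAv_zero_keep {R : SegRep G} {u v : V} (h : cAv R u v = 0) : keep R u v := by
  rw [cAv] at h
  split_ifs at h with h1 h2
  · omega
  · exact h2
  · omega

lemma cAv_zero_not_mid {R : SegRep G} {u v : V} (h : cAv R u v = 0) : ¬ isMid R v u := by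
  rw [cAv] at h
  split_ifs at h with h1 h2
  · omega
  · exact h1
  · omega

/-- Core containment analysis: if the scaled contact parameter of `u` with a neighbour
`x` lies on the (non-stub) `a`-piece of `(u,v)`, then either `x = v` and `u` keeps the
contact, or the contact with `x` is the hub of `u`. -/
lemma contain_analysis (R : SegRep G) (htf : G.CliqueFree 3)
    (hdeg : ∀ y : V, (G.neighborSet y).ncard ≤ 3) {u v x : V} (huv : G.Adj u v)
    (hux : G.Adj u x) (hm : ¬ isMid R u v) {t : ℤ}
    (h1 : min (8 * ctau R u v + cAv R u v * dlt R u v) (hubc R u) ≤ t)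
    (h2 : t ≤ max (8 * ctau R u v + cAv R u v * dlt R u v) (hubc R u))
    (ht : t = 8 * ctau R u x) :
    (x = v ∧ cAv R u v = 0) ∨ isMid R u x := by
  by_cases hmx : isMid R u x
  · exact Or.inr hmx
  · left
    have hc := cAv_mem R u v
    by_cases hxv : x = v
    · subst hxv
      refine ⟨rfl, ?_⟩
      rcases dlt_spec R htf hdeg hux hm with ⟨hd, hf⟩ | ⟨hd, hf⟩ <;>
        rw [hd] at h1 h2 <;> omega
    · exfalso
      have hopp := opp_sides R htf hdeg huv hux
        (by first | exact hxv | exact Ne.symm hxv) hm hmx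
      rcases dlt_spec R htf hdeg huv hm with ⟨hd, hf⟩ | ⟨hd, hf⟩ <;>
        rw [hd] at h1 h2 <;>
        rcases hopp with ⟨ho1, ho2⟩ | ⟨ho1, ho2⟩ <;> omega

/-- A stub piece and a non-stub piece of different half-edge vertices are disjoint. -/
lemma famAA_stub_nonstub (R : SegRep G) (htf : G.CliqueFree 3)
    (hdeg : ∀ x : V, (G.neighborSet x).ncard ≤ 3) {u v u' v' : V} (huv : G.Adj u v)
    (hu'v' : G.Adj u' v') (hne : u ≠ u') (hm : isMid R u v) (hm' : ¬ isMid R u' v')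
    {p : ℤ × ℤ} (h1 : onPc (pieceA R u v) p) (h2 : onPc (pieceA R u' v') p) : False := by
  rw [pieceA, if_pos hm] at h1
  rw [pieceA, if_neg hm'] at h2
  obtain ⟨t1, ha1, ha2, rfl⟩ := h1
  obtain ⟨t2, hb1, hb2, hp⟩ := h2
  simp only [mkPc_s, mkPc_e, mkPc_d, mkPc_b] at ha1 ha2 hb1 hb2 hp
  have hnmvu : ¬ isMid R v u := fun hh => mid_not_both R huv hm hh
  by_cases hvu' : v = u'
  · -- same line vertex
    subst hvu'
    have ht12 : t1 = t2 := pnt_inj hp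
    by_cases hv'u : v' = u
    · subst hv'u
      have hc2 : cAv R v v' = 2 := by rw [cAv, if_pos hm]
      rw [hc2] at hb1 hb2
      rcases dlt_spec R htf hdeg huv.symm hnmvu with ⟨hd, hf⟩ | ⟨hd, hf⟩ <;> omega
    · -- different contacts on the line of v
      have hsep := ctau_inj R htf huv.symm hu'v'
        (by first | exact hv'u | exact Ne.symm hv'u)
      have hopp := opp_sides R htf hdeg hu'v' huv.symm
        (by first | exact hv'u | exact Ne.symm hv'u) hm' hnmvu
      have hcb := cdlt_bound R v v'
      rcases dlt_spec R htf hdeg huv.symm hnmvu with ⟨hd, hf⟩ | ⟨hd, hf⟩ <;>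
        rcases hopp with ⟨ho1, ho2⟩ | ⟨ho1, ho2⟩ <;> omega
  · -- different line vertices: pin at the contact of v and u'
    have hov0 := off_bound R htf hdeg huv.symm hnmvu (j := 0) (by omega)
    have hov1 := off_bound R htf hdeg huv.symm hnmvu (j := 1) (by omega)
    have hou := off_bound R htf hdeg hu'v' hm' (j := cAv R u' v') (cAv_mem R u' v')
    have hur := hub_range R htf hdeg hu'v'
    obtain ⟨hadj, ht1, ht2⟩ := pin R hvu' (by omega) (by omega) (by omega) (by omega) hp
    have hsep := ctau_inj R htf huv.symm hadj
      (by first | exact hne | exact Ne.symm hne)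
    rcases dlt_cases R v u with hd | hd <;> omega

/-- Two `a`-pieces of half-edges at different vertices are disjoint. -/
lemma famAA_diff (R : SegRep G) (htf : G.CliqueFree 3)
    (hdeg : ∀ x : V, (G.neighborSet x).ncard ≤ 3) {u v u' v' : V} (huv : G.Adj u v)
    (hu'v' : G.Adj u' v') (hne : u ≠ u') {p : ℤ × ℤ}
    (h1 : onPc (pieceA R u v) p) (h2 : onPc (pieceA R u' v') p) : False := by
  by_cases hm : isMid R u v
  · by_cases hm' : isMid R u' v'
    ·
      rw [pieceA, if_pos hm] at h1
      rw [pieceA, if_pos hm'] at h2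
      obtain ⟨t1, ha1, ha2, rfl⟩ := h1
      obtain ⟨t2, hb1, hb2, hp⟩ := h2
      simp only [mkPc_s, mkPc_e, mkPc_d, mkPc_b] at ha1 ha2 hb1 hb2 hp
      have hnmvu : ¬ isMid R v u := fun hh => mid_not_both R huv hm hh
      have hnmv'u' : ¬ isMid R v' u' := fun hh => mid_not_both R hu'v' hm' hh
      by_cases hvv' : v = v'
      · subst hvv'
        have ht12 : t1 = t2 := pnt_inj hp
        have hsep := ctau_inj R htf huv.symm hu'v'.symm hne
        rcases dlt_cases R v u with hd | hd <;> rcases dlt_cases R v u' with hd' | hd' <;>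
          omega
      · have hov0 := off_bound R htf hdeg huv.symm hnmvu (j := 0) (by omega)
        have hov1 := off_bound R htf hdeg huv.symm hnmvu (j := 1) (by omega)
        have hov0' := off_bound R htf hdeg hu'v'.symm hnmv'u' (j := 0) (by omega)
        have hov1' := off_bound R htf hdeg hu'v'.symm hnmv'u' (j := 1) (by omega)
        obtain ⟨hadj, ht1, ht2⟩ := pin R hvv' (by omega) (by omega) (by omega) (by omega) hp
        by_cases hv'u : v' = u
        · subst hv'u
          -- the line of v' = u
          by_cases hu'v2 : u' = v
          · subst hu'v2
            exact mid_not_both R huv hm hm'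
          · have hsep := ctau_inj R htf hu'v'.symm huv
              (by first | exact hu'v2 | exact Ne.symm hu'v2)
            rcases dlt_cases R v' u' with hd | hd <;> omega
        · have hsep := ctau_inj R htf huv.symm hadj
            (by first | exact hv'u | exact Ne.symm hv'u)
          rcases dlt_cases R v u with hd | hd <;> omega
    · exact famAA_stub_nonstub R htf hdeg huv hu'v' hne hm hm' h1 h2
  · by_cases hm' : isMid R u' v'
    · exact famAA_stub_nonstub R htf hdeg hu'v' huv hne.symm hm' hm h2 h1
    ·
      rw [pieceA, if_neg hm] at h1
      rw [pieceA, if_neg hm'] at h2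
      obtain ⟨t1, ha1, ha2, rfl⟩ := h1
      obtain ⟨t2, hb1, hb2, hp⟩ := h2
      simp only [mkPc_s, mkPc_e, mkPc_d, mkPc_b] at ha1 ha2 hb1 hb2 hp
      have hou := off_bound R htf hdeg huv hm (j := cAv R u v) (cAv_mem R u v)
      have hou' := off_bound R htf hdeg hu'v' hm' (j := cAv R u' v') (cAv_mem R u' v')
      have hur := hub_range R htf hdeg huv
      have hur' := hub_range R htf hdeg hu'v'
      obtain ⟨hadj, ht1, ht2⟩ := pin R hne (by omega) (by omega) (by omega) (by omega) hp
      have hca := contain_analysis R htf hdeg huv hadj hm ha1 ha2 ht1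
      have hca' := contain_analysis R htf hdeg hu'v' hadj.symm hm' hb1 hb2 ht2
      rcases hca with ⟨rfl, hc0⟩ | hmid
      · rcases hca' with ⟨rfl, hc0'⟩ | hmid'
        · exact (keep_iff_not R htf hdeg hadj).mp (cAv_zero_keep hc0) (cAv_zero_keep hc0')
        · exact cAv_zero_not_mid hc0 hmid'
      · rcases hca' with ⟨rfl, hc0'⟩ | hmid'
        · exact cAv_zero_not_mid hc0' hmid
        · exact mid_not_both R hadj hmid hmid'

/-- Structural description of an `m`-piece. -/
lemma pieceM_shape (R : SegRep G) (htf : G.CliqueFree 3)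
    (hdeg : ∀ x : V, (G.neighborSet x).ncard ≤ 3) {u' v' : V} (h : G.Adj u' v') :
    ∃ r s, G.Adj r s ∧ ((r = u' ∧ s = v') ∨ (r = v' ∧ s = u')) ∧ ¬ isMid R r s ∧
    ∃ j0 : ℤ, (j0 = 0 ∨ j0 = 1) ∧
      pieceM R u' v' = mkPc (R.dir r) (8 * R.off r) (8 * ctau R r s + j0 * dlt R r s)
        (8 * ctau R r s + (j0 + 1) * dlt R r s) ∧
      (j0 = 0 → ¬ isMid R s r) := by
  by_cases hm : isMid R u' v'
  · refine ⟨v', u', h.symm, Or.inr ⟨rfl, rfl⟩, fun hh => mid_not_both R h hm hh, 1,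
      Or.inr rfl, ?_, by omega⟩
    rw [pieceM, if_pos hm]
    congr 1 <;> ring
  · by_cases hm2 : isMid R v' u'
    · refine ⟨u', v', h, Or.inl ⟨rfl, rfl⟩, hm, 1, Or.inr rfl, ?_, by omega⟩
      rw [pieceM, if_neg hm, if_pos hm2]
      congr 1 <;> ring
    · by_cases hk : keep R u' v'
      · refine ⟨v', u', h.symm, Or.inr ⟨rfl, rfl⟩, hm2, 0, Or.inl rfl, ?_, fun _ => hm⟩
        rw [pieceM, if_neg hm, if_neg hm2, if_pos hk]
        congr 1 <;> ring
      · refine ⟨u', v', h, Or.inl ⟨rfl, rfl⟩, hm, 0, Or.inl rfl, ?_, fun _ => hm2⟩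
        rw [pieceM, if_neg hm, if_neg hm2, if_neg hk]
        congr 1 <;> ring

/-- An `a`-piece and an `m`-piece of different edges are disjoint. -/
lemma famAM_diff (R : SegRep G) (htf : G.CliqueFree 3)
    (hdeg : ∀ x : V, (G.neighborSet x).ncard ≤ 3) {u v u' v' : V} (huv : G.Adj u v)
    (hu'v' : G.Adj u' v') (hnedge : ¬((u' = u ∧ v' = v) ∨ (u' = v ∧ v' = u)))
    {p : ℤ × ℤ} (h1 : onPc (pieceA R u v) p) (h2 : onPc (pieceM R u' v') p) : False := by
  obtain ⟨r, s, hrs, hset, hnmrs, j0, hj0, hMeq, hj0mid⟩ := pieceM_shape R htf hdeg hu'v'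
  have hedge_rs : ¬((r = u ∧ s = v) ∨ (r = v ∧ s = u)) := by
    rcases hset with ⟨rfl, rfl⟩ | ⟨rfl, rfl⟩
    · intro hh
      rcases hh with ⟨h1, h2⟩ | ⟨h1, h2⟩
      · exact hnedge (Or.inl ⟨h1, h2⟩)
      · exact hnedge (Or.inr ⟨h1, h2⟩)
    · intro hh
      rcases hh with ⟨h1, h2⟩ | ⟨h1, h2⟩
      · exact hnedge (Or.inr ⟨h2, h1⟩)
      · exact hnedge (Or.inl ⟨h2, h1⟩)
  rw [hMeq] at h2
  obtain ⟨t2, hb1, hb2, hp2⟩ := h2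
  simp only [mkPc_s, mkPc_e, mkPc_d, mkPc_b] at hb1 hb2 hp2
  have hj02 : 0 ≤ j0 ∧ j0 + 1 ≤ 2 := by omega
  by_cases hmA : isMid R u v
  ·
    rw [pieceA, if_pos hmA] at h1
    obtain ⟨t1, ha1, ha2, rfl⟩ := h1
    simp only [mkPc_s, mkPc_e, mkPc_d, mkPc_b] at ha1 ha2 hp2
    have hnmvu : ¬ isMid R v u := fun hh => mid_not_both R huv hmA hh
    by_cases hlv : v = r
    · subst hlv
      have ht12 := pnt_inj hp2
      have hus : u ≠ s := by
        intro hh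
        subst hh
        exact hedge_rs (Or.inr ⟨rfl, rfl⟩)
      have hsep := ctau_inj R htf huv.symm hrs hus
      rcases dlt_cases R v u with hd | hd <;> rw [hd] at ha1 ha2 <;>
        rcases dlt_cases R v s with hd2 | hd2 <;> rw [hd2] at hb1 hb2 <;>
        rcases hj0 with rfl | rfl <;> omega
    · have hov0 := off_bound R htf hdeg huv.symm hnmvu (j := 0) (by omega)
      have hov1 := off_bound R htf hdeg huv.symm hnmvu (j := 1) (by omega)
      have hor0 := off_bound R htf hdeg hrs hnmrs (j := j0) (by omega)
      have hor1 := off_bound R htf hdeg hrs hnmrs (j := j0 + 1) (by omega)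
      obtain ⟨hadj, ht1, ht2⟩ := pin R hlv (by omega) (by omega) (by omega) (by omega) hp2
      by_cases hru : r = u
      · subst hru
        by_cases hsv : s = v
        · subst hsv
          exact hedge_rs (Or.inl ⟨rfl, rfl⟩)
        · have hsep := ctau_inj R htf hrs huv (by first | exact hsv | exact Ne.symm hsv)
          rcases dlt_cases R r s with hd | hd <;> rw [hd] at hb1 hb2 <;>
            rcases hj0 with rfl | rfl <;> omega
      · have hsep := ctau_inj R htf huv.symm hadj
          (by first | exact hru | exact Ne.symm hru)
        rcases dlt_cases R v u with hd | hd <;> rw [hd] at ha1 ha2 <;> omega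
  ·
    rw [pieceA, if_neg hmA] at h1
    obtain ⟨t1, ha1, ha2, rfl⟩ := h1
    simp only [mkPc_s, mkPc_e, mkPc_d, mkPc_b] at ha1 ha2 hp2
    by_cases hlu : u = r
    · subst hlu
      have ht12 := pnt_inj hp2
      by_cases hsv : s = v
      · subst hsv
        exact hedge_rs (Or.inl ⟨rfl, rfl⟩)
      · have hopp := opp_sides R htf hdeg huv hrs
          (by first | exact hsv | exact Ne.symm hsv) hmA hnmrs
        have hc := cAv_mem R u v
        rcases dlt_spec R htf hdeg huv hmA with ⟨hd, hf⟩ | ⟨hd, hf⟩ <;>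
          rw [hd] at ha1 ha2 <;>
          rcases dlt_spec R htf hdeg hrs hnmrs with ⟨hd2, hf2⟩ | ⟨hd2, hf2⟩ <;>
          rw [hd2] at hb1 hb2 <;>
          rcases hj0 with rfl | rfl <;>
          rcases hopp with ⟨ho1, ho2⟩ | ⟨ho1, ho2⟩ <;> omega
    · have hou0 := off_bound R htf hdeg huv hmA (j := cAv R u v) (cAv_mem R u v)
      have hur := hub_range R htf hdeg huv
      have hor0 := off_bound R htf hdeg hrs hnmrs (j := j0) (by omega)
      have hor1 := off_bound R htf hdeg hrs hnmrs (j := j0 + 1) (by omega)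
      obtain ⟨hadj, ht1, ht2⟩ := pin R hlu (by omega) (by omega) (by omega) (by omega) hp2
      by_cases hsu : s = u
      · subst hsu
        have hj00 : j0 = 0 := by
          rcases hj0 with rfl | rfl
          · rfl
          · exfalso
            rcases dlt_cases R r s with hd | hd <;> rw [hd] at hb1 hb2 <;> omega
        have hnm_ur : ¬ isMid R s r := hj0mid hj00
        rcases contain_analysis R htf hdeg huv hadj hmA ha1 ha2 ht1 with ⟨rfl, hc0⟩ | hmid
        · exact hedge_rs (Or.inr ⟨rfl, rfl⟩)
        · exact hnm_ur hmid
      · have hsep := ctau_inj R htf hadj.symm hrs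
          (by first | exact hsu | exact Ne.symm hsu)
        rcases dlt_cases R r s with hd | hd <;> rw [hd] at hb1 hb2 <;>
          rcases hj0 with rfl | rfl <;> omega

/-- Two `m`-pieces of different edges are disjoint. -/
lemma famMM_diff (R : SegRep G) (htf : G.CliqueFree 3)
    (hdeg : ∀ x : V, (G.neighborSet x).ncard ≤ 3) {u1 v1 u2 v2 : V} (h1e : G.Adj u1 v1)
    (h2e : G.Adj u2 v2) (hnedge : ¬((u2 = u1 ∧ v2 = v1) ∨ (u2 = v1 ∧ v2 = u1)))
    {p : ℤ × ℤ} (h1 : onPc (pieceM R u1 v1) p) (h2 : onPc (pieceM R u2 v2) p) : False := by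
  obtain ⟨r1, s1, hrs1, hset1, hnm1, j1, hj1, hMeq1, hj1mid⟩ := pieceM_shape R htf hdeg h1e
  obtain ⟨r2, s2, hrs2, hset2, hnm2, j2, hj2, hMeq2, hj2mid⟩ := pieceM_shape R htf hdeg h2e
  have hnot : ¬((r2 = r1 ∧ s2 = s1) ∨ (r2 = s1 ∧ s2 = r1)) := by
    intro hh
    apply hnedge
    rcases hset1 with ⟨rfl, rfl⟩ | ⟨rfl, rfl⟩ <;> rcases hset2 with ⟨rfl, rfl⟩ | ⟨rfl, rfl⟩ <;>
      rcases hh with ⟨h1, h2⟩ | ⟨h1, h2⟩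
    · exact Or.inl ⟨h1, h2⟩
    · exact Or.inr ⟨h1, h2⟩
    · exact Or.inr ⟨h2, h1⟩
    · exact Or.inl ⟨h2, h1⟩
    · exact Or.inr ⟨h1, h2⟩
    · exact Or.inl ⟨h1, h2⟩
    · exact Or.inl ⟨h2, h1⟩
    · exact Or.inr ⟨h2, h1⟩
  rw [hMeq1] at h1
  rw [hMeq2] at h2
  obtain ⟨t1, ha1, ha2, rfl⟩ := h1
  obtain ⟨t2, hb1, hb2, hp2⟩ := h2
  simp only [mkPc_s, mkPc_e, mkPc_d, mkPc_b] at ha1 ha2 hb1 hb2 hp2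
  by_cases hr : r1 = r2
  · subst hr
    have ht12 := pnt_inj hp2
    by_cases hs : s1 = s2
    · subst hs
      exact hnot (Or.inl ⟨rfl, rfl⟩)
    · have hsep := ctau_inj R htf hrs1 hrs2 hs
      rcases dlt_cases R r1 s1 with hd | hd <;> rw [hd] at ha1 ha2 <;>
        rcases dlt_cases R r1 s2 with hd2 | hd2 <;> rw [hd2] at hb1 hb2 <;>
        rcases hj1 with rfl | rfl <;> rcases hj2 with rfl | rfl <;> omega
  · have ho10 := off_bound R htf hdeg hrs1 hnm1 (j := j1) (by omega)
    have ho11 := off_bound R htf hdeg hrs1 hnm1 (j := j1 + 1) (by omega)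
    have ho20 := off_bound R htf hdeg hrs2 hnm2 (j := j2) (by omega)
    have ho21 := off_bound R htf hdeg hrs2 hnm2 (j := j2 + 1) (by omega)
    obtain ⟨hadj, ht1, ht2⟩ := pin R hr (by omega) (by omega) (by omega) (by omega) hp2
    have hr2s1 : r2 = s1 := by
      by_contra hneq
      have hsep := ctau_inj R htf hrs1 hadj (by first | exact hneq | exact Ne.symm hneq)
      rcases dlt_cases R r1 s1 with hd | hd <;> rw [hd] at ha1 ha2 <;>
        rcases hj1 with rfl | rfl <;> omega
    have hr1s2 : r1 = s2 := by
      by_contra hneq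
      have hsep := ctau_inj R htf hrs2 hadj.symm (by first | exact hneq | exact Ne.symm hneq)
      rcases dlt_cases R r2 s2 with hd | hd <;> rw [hd] at hb1 hb2 <;>
        rcases hj2 with rfl | rfl <;> omega
    exact hnot (Or.inr ⟨hr2s1, hr1s2.symm⟩)

/-- Assignment of pieces to pairs of subdivision vertices. -/
noncomputable def pcF (R : SegRep G) : SubdivV G × SubdivV G → Pc
  | (Sum.inl _, Sum.inr e) => pieceA R e.1.1 e.1.2
  | (Sum.inr e, Sum.inl _) => pieceA R e.1.1 e.1.2
  | (Sum.inr e, Sum.inr _) => pieceM R e.1.1 e.1.2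
  | _ => ⟨false, 0, 0, 1⟩

/-- The piece assigned to an edge of the 2-subdivision. -/
noncomputable def pcOf (R : SegRep G) (ε : (twoSubdivision G).edgeSet) : Pc :=
  pcF R ε.1.out

lemma pcOf_aVert (R : SegRep G) {u v : V} (h : G.Adj u v) :
    pcOf R (aVert G u v h) = pieceA R u v := by
  have hout : Sym2.mk (aVert G u v h).1.out.1 (aVert G u v h).1.out.2 = s(Sum.inl u, sv G u v h) := Quot.out_eq _
  replace hout := (Sym2.mk_eq_mk_iff (q := (Sum.inl u, sv G u v h))).mp hout
  rcases hout with ho | ho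
  · rw [pcOf, ho]
    rfl
  · rw [pcOf, ho]
    rfl

lemma pcOf_mVert (R : SegRep G) (htf : G.CliqueFree 3)
    (hdeg : ∀ x : V, (G.neighborSet x).ncard ≤ 3) {u v : V} (h : G.Adj u v) :
    pcOf R (mVert G u v h) = pieceM R u v := by
  have hout : Sym2.mk (mVert G u v h).1.out.1 (mVert G u v h).1.out.2 = s(sv G u v h, sv G v u h.symm) :=
    Quot.out_eq _
  replace hout := (Sym2.mk_eq_mk_iff (q := (sv G u v h, sv G v u h.symm))).mp hout
  rcases hout with ho | ho
  · rw [pcOf, ho]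
    rfl
  · rw [pcOf, ho]
    exact (pieceM_symm R htf hdeg h).symm

end Families

/-- If `G` is a triangle-free finite graph of maximum degree at most 3 admitting a 0-bend
CPG representation and `G'` is its 2-subdivision, then the line graph `L(G')` admits a
0-bend CPG representation. -/
theorem lineGraph_of_twoSubdivision_is_B0_CPG (V : Type) [Fintype V] (G : SimpleGraph V)
    (htf : G.CliqueFree 3) (hdeg : ∀ v : V, (G.neighborSet v).ncard ≤ 3)
    (hG : IsBkCPG G 0) :
    IsBkCPG (lineGraph (twoSubdivision G)) 0 := by
  classical
  obtain ⟨R0, hb⟩ := hG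
  obtain ⟨R⟩ := segRep_of_b0 R0 hb
  apply isBkCPG_of_pieces (lineGraph (twoSubdivision G)) (pcOf R)
  · -- validity of pieces
    intro w
    rcases edge_classify w with ⟨u, v, h, rfl⟩ | ⟨u, v, h, rfl⟩
    · rw [pcOf_aVert]
      exact pieceA_valid R htf hdeg h
    · rw [pcOf_mVert R htf hdeg h]
      exact pieceM_valid R h
  · -- key: intersections are single extreme points
    intro w1 w2 hne p q hp1 hp2 hq1 hq2
    rcases edge_classify w1 with ⟨u, v, h, rfl⟩ | ⟨u, v, h, rfl⟩ <;>
      rcases edge_classify w2 with ⟨u', v', h', rfl⟩ | ⟨u', v', h', rfl⟩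
    · -- aVert vs aVert
      rw [pcOf_aVert] at hp1 hp2 hq1 hq2 ⊢
      by_cases huu : u = u'
      · subst huu
        have hvv : v ≠ v' := by
          intro hvv
          subst hvv
          exact hne rfl
        have r1 := famAA_same R htf hdeg h h' hvv hp1 hp2
        have r2 := famAA_same R htf hdeg h h' hvv hq1 hq2
        exact ⟨r1.1.trans r2.1.symm, Or.inl r1.2⟩
      · exact (famAA_diff R htf hdeg h h' huu hp1 hp2).elim
    · -- aVert vs mVert
      rw [pcOf_aVert] at hp1 hq1 ⊢
      rw [pcOf_mVert R htf hdeg h'] at hp2 hq2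
      by_cases hsame : (u' = u ∧ v' = v) ∨ (u' = v ∧ v' = u)
      · have hM : pieceM R u' v' = pieceM R u v := by
          rcases hsame with ⟨rfl, rfl⟩ | ⟨rfl, rfl⟩
          · rfl
          · exact (pieceM_symm R htf hdeg h).symm
        rw [hM] at hp2 hq2
        have r1 := famAM_same R htf hdeg h hp1 hp2
        have r2 := famAM_same R htf hdeg h hq1 hq2
        exact ⟨r1.1.trans r2.1.symm, Or.inl r1.2⟩
      · exact (famAM_diff R htf hdeg h h' hsame hp1 hp2).elim
    · -- mVert vs aVert
      rw [pcOf_aVert] at hp2 hq2 ⊢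
      rw [pcOf_mVert R htf hdeg h] at hp1 hq1 ⊢
      by_cases hsame : (u = u' ∧ v = v') ∨ (u = v' ∧ v = u')
      · have hM : pieceM R u v = pieceM R u' v' := by
          rcases hsame with ⟨rfl, rfl⟩ | ⟨rfl, rfl⟩
          · rfl
          · exact (pieceM_symm R htf hdeg h').symm
        rw [hM] at hp1 hq1
        have r1 := famAM_same R htf hdeg h' hp2 hp1
        have r2 := famAM_same R htf hdeg h' hq2 hq1
        exact ⟨r1.1.trans r2.1.symm, Or.inr r1.2⟩
      · exact (famAM_diff R htf hdeg h' h hsame hp2 hp1).elim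
    · -- mVert vs mVert
      rw [pcOf_mVert R htf hdeg h] at hp1 hq1 ⊢
      rw [pcOf_mVert R htf hdeg h'] at hp2 hq2
      have hnedge : ¬((u' = u ∧ v' = v) ∨ (u' = v ∧ v' = u)) := by
        intro hh
        apply hne
        rcases hh with ⟨rfl, rfl⟩ | ⟨rfl, rfl⟩
        · rfl
        · exact (mVert_symm u' v' h').symm
      exact (famMM_diff R htf hdeg h h' hnedge hp1 hp2).elim
  · -- adjacency iff shared point
    intro w1 w2 hne
    rcases edge_classify w1 with ⟨u, v, h, rfl⟩ | ⟨u, v, h, rfl⟩ <;>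
      rcases edge_classify w2 with ⟨u', v', h', rfl⟩ | ⟨u', v', h', rfl⟩
    · rw [adj_aVert_aVert h h', pcOf_aVert, pcOf_aVert]
      constructor
      · rintro ⟨rfl, -⟩
        exact ⟨hubPt R u, hubPt_mem R htf hdeg h, hubPt_mem R htf hdeg h'⟩
      · rintro ⟨p, hp1, hp2⟩
        by_cases huu : u = u'
        · subst huu
          refine ⟨rfl, ?_⟩
          rintro ⟨-, rfl⟩
          exact hne rfl
        · exact (famAA_diff R htf hdeg h h' huu hp1 hp2).elim
    · rw [adj_aVert_mVert h h', pcOf_aVert, pcOf_mVert R htf hdeg h']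
      constructor
      · intro hsame
        have hM : pieceM R u' v' = pieceM R u v := by
          rcases hsame with ⟨rfl, rfl⟩ | ⟨rfl, rfl⟩
          · rfl
          · exact pieceM_symm R htf hdeg h'
        refine ⟨desigAM R u v, (desig_mem_A R htf hdeg h).1, ?_⟩
        rw [hM]
        exact desig_mem_M R h
      · rintro ⟨p, hp1, hp2⟩
        by_cases hsame : (u' = u ∧ v' = v) ∨ (u' = v ∧ v' = u)
        · rcases hsame with ⟨rfl, rfl⟩ | ⟨rfl, rfl⟩
          · exact Or.inl ⟨rfl, rfl⟩
          · exact Or.inr ⟨rfl, rfl⟩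
        · exact (famAM_diff R htf hdeg h h' hsame hp1 hp2).elim
    · rw [SimpleGraph.adj_comm, adj_aVert_mVert h' h, pcOf_aVert R h',
        pcOf_mVert R htf hdeg h]
      constructor
      · intro hsame
        have hM : pieceM R u v = pieceM R u' v' := by
          rcases hsame with ⟨rfl, rfl⟩ | ⟨rfl, rfl⟩
          · rfl
          · exact pieceM_symm R htf hdeg h
        refine ⟨desigAM R u' v', ?_, (desig_mem_A R htf hdeg h').1⟩
        rw [hM]
        exact desig_mem_M R h'
      · rintro ⟨p, hp1, hp2⟩
        by_cases hsame : (u = u' ∧ v = v') ∨ (u = v' ∧ v = u')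
        · rcases hsame with ⟨rfl, rfl⟩ | ⟨rfl, rfl⟩
          · exact Or.inl ⟨rfl, rfl⟩
          · exact Or.inr ⟨rfl, rfl⟩
        · exact (famAM_diff R htf hdeg h' h hsame hp2 hp1).elim
    · constructor
      · intro hadj
        exact (adj_mVert_mVert h h' hadj).elim
      · rintro ⟨p, hp1, hp2⟩
        rw [pcOf_mVert R htf hdeg h] at hp1
        rw [pcOf_mVert R htf hdeg h'] at hp2
        have hnedge : ¬((u' = u ∧ v' = v) ∨ (u' = v ∧ v' = u)) := by
          intro hh
          apply hne
          rcases hh with ⟨rfl, rfl⟩ | ⟨rfl, rfl⟩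
          · rfl
          · exact (mVert_symm u' v' h').symm
        exact (famMM_diff R htf hdeg h h' hnedge hp1 hp2).elim
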